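/- arXiv:2412.03554 — 11 statements merged into one kernel-verified Lean document; each statement's English description precedes it below -/
import Mathlib

section
/- Let p be a positive stochastic choice on a finite set X. If p is SCC with respect to two partitions {X_i}_{i∈I} and {X_j}_{j∈J}, and X_i ∩ X_j ≠ ∅ for some i ∈ I, j ∈ J, then X_i ⊆ X_j or X_j ⊆ X_i. -/
open Finset
open scoped Classical

/-- `q` is a positive stochastic choice on the menus included in `D`. -/
def PosSCOn {Y : Type*} [DecidableEq Y] (D : Finset Y) (q : Y → Finset Y → ℝ) : Prop :=
  (∀ y (A : Finset Y), y ∉ A → q y A = 0) ∧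
  ∀ A : Finset Y, A.Nonempty → A ⊆ D →
    (∑ y ∈ A, q y A) = 1 ∧ ∀ y ∈ A, 0 < q y A

/-- The class of index `i` in the partition induced by `π`. -/
def classOf {X I : Type*} [Fintype X] [DecidableEq I] (π : X → I) (i : I) : Finset X :=
  Finset.univ.filter fun x => π x = i

/-- `p` is a stochastic choice with categorization w.r.t. the partition induced by `π`,
with components `ω` (choice among classes) and `σ` (choices within classes). -/
def IsSCC {X I : Type*} [Fintype X] [DecidableEq X] [Fintype I] [DecidableEq I]
    (p : X → Finset X → ℝ) (π : X → I) (ω : I → Finset I → ℝ)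
    (σ : I → X → Finset X → ℝ) : Prop :=
  Function.Surjective π ∧
  PosSCOn Finset.univ ω ∧
  (∀ i, PosSCOn (classOf π i) (σ i)) ∧
  ∀ A : Finset X, A.Nonempty → ∀ a ∈ A,
    p a A = ω (π a) (A.image π) * σ (π a) a (A.filter fun x => π x = π a)

/-- `p` is a stochastic choice with weak categorization w.r.t. `π`, with menu-dependent
weights `ω` over classes and within-class choices `σ`. -/
def IsSCWC {X I : Type*} [Fintype X] [DecidableEq X] [Fintype I] [DecidableEq I]
    (p : X → Finset X → ℝ) (π : X → I) (ω : Finset X → I → ℝ)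
    (σ : I → X → Finset X → ℝ) : Prop :=
  Function.Surjective π ∧
  (∀ A : Finset X, A.Nonempty →
    (∀ i, 0 ≤ ω A i ∧ (ω A i = 0 ↔ i ∉ A.image π)) ∧
    (∑ i ∈ A.image π, ω A i) = 1) ∧
  (∀ i, PosSCOn (classOf π i) (σ i)) ∧
  ∀ A : Finset X, A.Nonempty → ∀ a ∈ A,
    p a A = ω A (π a) * σ (π a) a (A.filter fun x => π x = π a)

/-- C-IND: external items do not alter choice probability ratios within `C`. -/
def CInd {X : Type*} [Fintype X] [DecidableEq X] (p : X → Finset X → ℝ)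
    (C : Finset X) : Prop :=
  ∀ S ⊆ C, ∀ a ∈ S, ∀ b ∈ S, ∀ E ⊆ Cᶜ,
    p a S / p b S = p a (S ∪ E) / p b (S ∪ E)

/-- C-NEU: items of `C` are perfect substitutes from the point of view of external items. -/
def CNeu {X : Type*} [Fintype X] [DecidableEq X] (p : X → Finset X → ℝ)
    (C : Finset X) : Prop :=
  ∀ E ⊆ Cᶜ, ∀ x ∈ E, ∀ S ⊆ C, S.Nonempty → p x (S ∪ E) = p x (C ∪ E)

def IsCategory {X : Type*} [Fintype X] [DecidableEq X] (p : X → Finset X → ℝ)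
    (C : Finset X) : Prop :=
  CInd p C ∧ CNeu p C

def NonTrivialSet {X : Type*} [Fintype X] (C : Finset X) : Prop :=
  1 < C.card ∧ C.card < Fintype.card X

def IsPartition {X : Type*} [Fintype X] [DecidableEq X] (P : Finset (Finset X)) : Prop :=
  (∀ B ∈ P, B.Nonempty) ∧ ∀ x : X, ∃! B, B ∈ P ∧ x ∈ B

def NonDegPart {X : Type*} [Fintype X] (P : Finset (Finset X)) : Prop :=
  1 < P.card ∧ P.card < Fintype.card X

/-- `p` is SCC w.r.t. the partition `P` of `X` (partition given as a set of blocks). -/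
def IsSCCPart {X : Type*} [Fintype X] [DecidableEq X] (p : X → Finset X → ℝ)
    (P : Finset (Finset X)) : Prop :=
  IsPartition P ∧
  ∃ (π : X → Finset X) (ω : Finset X → Finset (Finset X) → ℝ)
    (σ : Finset X → X → Finset X → ℝ),
    (∀ x, π x ∈ P ∧ x ∈ π x) ∧
    PosSCOn P ω ∧
    (∀ B ∈ P, PosSCOn B (σ B)) ∧
    ∀ A : Finset X, A.Nonempty → ∀ a ∈ A,
      p a A = ω (π a) (A.image π) * σ (π a) a (A.filter fun x => x ∈ π a)

/-- `p` is SCWC w.r.t. the partition `P` of `X`. -/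
def IsSCWCPart {X : Type*} [Fintype X] [DecidableEq X] (p : X → Finset X → ℝ)
    (P : Finset (Finset X)) : Prop :=
  IsPartition P ∧
  ∃ (π : X → Finset X) (ω : Finset X → Finset X → ℝ)
    (σ : Finset X → X → Finset X → ℝ),
    (∀ x, π x ∈ P ∧ x ∈ π x) ∧
    (∀ A : Finset X, A.Nonempty →
      (∀ B, 0 ≤ ω A B ∧ (ω A B = 0 ↔ B ∉ A.image π)) ∧
      (∑ B ∈ A.image π, ω A B) = 1) ∧
    (∀ B ∈ P, PosSCOn B (σ B)) ∧
    ∀ A : Finset X, A.Nonempty → ∀ a ∈ A,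
      p a A = ω A (π a) * σ (π a) a (A.filter fun x => x ∈ π a)

/-- A deterministic choice function on menus. -/
def IsChoiceFun {Y : Type*} [DecidableEq Y] (c : Finset Y → Y) : Prop :=
  ∀ A : Finset Y, A.Nonempty → c A ∈ A

/-- A deterministic choice is resolvable w.r.t. the partition induced by `π`. -/
def Resolvable {X I : Type*} [Fintype X] [DecidableEq X] [DecidableEq I]
    (π : X → I) (c : Finset X → X) : Prop :=
  ∃ (cI : Finset I → I) (cf : I → Finset X → X),
    IsChoiceFun cI ∧
    (∀ i, ∀ S : Finset X, S.Nonempty → S ⊆ classOf π i → cf i S ∈ S) ∧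
    ∀ A : Finset X, A.Nonempty →
      c A = cf (cI (A.image π)) (A.filter fun x => π x = cI (A.image π))

/-- `q` admits a random utility representation on menus included in `D`:
a probability distribution over rankings (linear orders, encoded as bijections with `Fin n`)
such that the choice probability of `y` from `A` is the probability that `y` is ranked
above every other element of `A`. -/
def IsRUMOn {Y : Type*} [Fintype Y] [DecidableEq Y] (D : Finset Y)
    (q : Y → Finset Y → ℝ) : Prop :=
  ∃ P : (Y ≃ Fin (Fintype.card Y)) → ℝ,
    (∀ L, 0 ≤ P L) ∧ (∑ L, P L) = 1 ∧
    ∀ A : Finset Y, A.Nonempty → A ⊆ D → ∀ y ∈ A,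
      q y A = ∑ L ∈ Finset.univ.filter (fun L : Y ≃ Fin (Fintype.card Y) =>
        ∀ b ∈ A, b ≠ y → L b < L y), P L

/-- `p` is locally rationalizable at `G`. -/
def LocallyRationalizable {X : Type*} [Fintype X] [DecidableEq X]
    (p : X → Finset X → ℝ) (G : Finset X) : Prop :=
  ∃ q : (X ≃ Fin (Fintype.card X)) → ℝ,
    (∀ L, 0 ≤ q L) ∧ (∑ L, q L) = 1 ∧
    ∀ x ∈ G, ∀ A : Finset X, A.Nonempty → x ∈ A →
      p x A = (∑ a ∈ A ∩ G, p a A) *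
        ∑ L ∈ Finset.univ.filter (fun L : X ≃ Fin (Fintype.card X) =>
          ∀ b ∈ A ∩ G, b ≠ x → L b < L x), q L

/-- if `p` is SCC w.r.t. two partitions, then any two of their classes
having nonempty intersection must be nested. -/
theorem stmt2 {X I J : Type*} [Fintype X] [DecidableEq X]
    [Fintype I] [DecidableEq I] [Fintype J] [DecidableEq J]
    (p : X → Finset X → ℝ) (hcard : 3 ≤ Fintype.card X)
    (hp : PosSCOn Finset.univ p)
    (π₁ : X → I) (ω₁ : I → Finset I → ℝ) (σ₁ : I → X → Finset X → ℝ)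
    (h₁ : IsSCC p π₁ ω₁ σ₁)
    (π₂ : X → J) (ω₂ : J → Finset J → ℝ) (σ₂ : J → X → Finset X → ℝ)
    (h₂ : IsSCC p π₂ ω₂ σ₂)
    (i : I) (j : J) (hij : (classOf π₁ i ∩ classOf π₂ j).Nonempty) :
    classOf π₁ i ⊆ classOf π₂ j ∨ classOf π₂ j ⊆ classOf π₁ i := by
  by_contra hcon
  push_neg at hcon
  obtain ⟨h1, h2⟩ := hcon
  obtain ⟨a, ha⟩ := hij
  simp only [Finset.mem_inter, classOf, Finset.mem_filter, Finset.mem_univ, true_and] at ha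
  obtain ⟨ha1, ha2⟩ := ha
  obtain ⟨b, hb1, hb2⟩ := Finset.not_subset.mp h1
  obtain ⟨c, hc1, hc2⟩ := Finset.not_subset.mp h2
  simp only [classOf, Finset.mem_filter, Finset.mem_univ, true_and] at hb1 hb2 hc1 hc2
  have hab : a ≠ b := fun h => hb2 (by rw [← h, ha2])
  have hac : a ≠ c := fun h => hc2 (by rw [← h, ha1])
  have hbc : b ≠ c := fun h => hc2 (by rw [← h, hb1])
  set B : Finset X := {b, c} with hB
  set A : Finset X := insert a B with hA
  have haA : a ∈ A := by simp [hA]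
  have hcA : c ∈ A := by simp [hA, hB]
  have hcB : c ∈ B := by simp [hB]
  have hAne : A.Nonempty := ⟨a, haA⟩
  have hBne : B.Nonempty := ⟨c, hcB⟩
  obtain ⟨hs1, hw1, hg1, hP1⟩ := h₁
  obtain ⟨hs2, hw2, hg2, hP2⟩ := h₂
  -- π₁-side: p c A = p c B
  have him1 : A.image π₁ = B.image π₁ := by
    rw [hA, Finset.image_insert, Finset.insert_eq_self]
    exact Finset.mem_image.mpr ⟨b, by simp [hB], by rw [hb1, ha1]⟩
  have hfA1 : A.filter (fun x => π₁ x = π₁ c) = {c} := by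
    ext x
    simp only [hA, hB, Finset.mem_filter, Finset.mem_insert, Finset.mem_singleton]
    constructor
    · rintro ⟨rfl | rfl | rfl, hx⟩
      · exact absurd (by rw [← hx, ha1]) hc2
      · exact absurd (by rw [← hx, hb1]) hc2
      · rfl
    · rintro rfl; exact ⟨Or.inr (Or.inr rfl), rfl⟩
  have hfB1 : B.filter (fun x => π₁ x = π₁ c) = {c} := by
    ext x
    simp only [hB, Finset.mem_filter, Finset.mem_insert, Finset.mem_singleton]
    constructor
    · rintro ⟨rfl | rfl, hx⟩
      · exact absurd (by rw [← hx, hb1]) hc2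
      · rfl
    · rintro rfl; exact ⟨Or.inr rfl, rfl⟩
  have hpcAB : p c A = p c B := by
    rw [hP1 A hAne c hcA, hP1 B hBne c hcB, hfA1, hfB1, him1]
  -- π₂-side
  have him2 : A.image π₂ = B.image π₂ := by
    rw [hA, Finset.image_insert, Finset.insert_eq_self]
    exact Finset.mem_image.mpr ⟨c, by simp [hB], by rw [hc1, ha2]⟩
  have hfA2 : A.filter (fun x => π₂ x = j) = {a, c} := by
    ext x
    simp only [hA, hB, Finset.mem_filter, Finset.mem_insert, Finset.mem_singleton]
    constructor
    · rintro ⟨rfl | rfl | rfl, hx⟩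
      · exact Or.inl rfl
      · exact absurd hx hb2
      · exact Or.inr rfl
    · rintro (rfl | rfl)
      · exact ⟨Or.inl rfl, ha2⟩
      · exact ⟨Or.inr (Or.inr rfl), hc1⟩
  have hfB2 : B.filter (fun x => π₂ x = j) = {c} := by
    ext x
    simp only [hB, Finset.mem_filter, Finset.mem_insert, Finset.mem_singleton]
    constructor
    · rintro ⟨rfl | rfl, hx⟩
      · exact absurd hx hb2
      · rfl
    · rintro rfl; exact ⟨Or.inr rfl, hc1⟩
  have hpaA : p a A = ω₂ j (A.image π₂) * σ₂ j a {a, c} := by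
    have := hP2 A hAne a haA
    rw [ha2] at this
    rw [this, hfA2]
  have hpcA : p c A = ω₂ j (A.image π₂) * σ₂ j c {a, c} := by
    have := hP2 A hAne c hcA
    rw [hc1] at this
    rw [this, hfA2]
  have hpcB : p c B = ω₂ j (B.image π₂) * σ₂ j c {c} := by
    have := hP2 B hBne c hcB
    rw [hc1] at this
    rw [this, hfB2]
  -- σ₂ sums
  have hsub : ({a, c} : Finset X) ⊆ classOf π₂ j := by
    intro x hx
    simp only [Finset.mem_insert, Finset.mem_singleton] at hx
    rcases hx with rfl | rfl <;>
      simp [classOf, ha2, hc1]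
  have hsum : σ₂ j a {a, c} + σ₂ j c {a, c} = 1 := by
    have := ((hg2 j).2 {a, c} ⟨a, by simp⟩ hsub).1
    rwa [Finset.sum_pair hac] at this
  have hone : σ₂ j c {c} = 1 := by
    have := ((hg2 j).2 {c} ⟨c, by simp⟩ (fun x hx => by
      simp only [Finset.mem_singleton] at hx; subst hx; simp [classOf, hc1])).1
    rwa [Finset.sum_singleton] at this
  have hpos : 0 < p a A := (hp.2 A hAne (Finset.subset_univ A)).2 a haA
  have : p a A + p c A = p c B := by
    rw [hpaA, hpcA, hpcB, hone, him2, mul_one, ← mul_add, hsum, mul_one]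
  rw [hpcAB] at this
  linarith
end

section
/- Among all partitions of X with respect to which a given positive stochastic choice p is non-degenerate SCC, there exists a unique coarsest one; moreover every other such partition refines it, i.e., each of its classes is contained in some class of the coarsest partition. -/
open Finset
open scoped Classical

section AuxSCC

variable {X : Type*} [Fintype X] [DecidableEq X] {p : X → Finset X → ℝ}

lemma psum_one (hp : PosSCOn Finset.univ p) {A : Finset X} (hA : A.Nonempty) :
    ∑ y ∈ A, p y A = 1 := (hp.2 A hA (Finset.subset_univ A)).1

lemma ppos (hp : PosSCOn Finset.univ p) {A : Finset X} {y : X} (hy : y ∈ A) :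
    0 < p y A := (hp.2 A ⟨y, hy⟩ (Finset.subset_univ A)).2 y hy

lemma part_block_eq {P : Finset (Finset X)} (hP : IsPartition P) {B C : Finset X}
    (hB : B ∈ P) (hC : C ∈ P) {x : X} (hxB : x ∈ B) (hxC : x ∈ C) : B = C := by
  obtain ⟨B', hB', hun⟩ := hP.2 x
  rw [hun B ⟨hB, hxB⟩, hun C ⟨hC, hxC⟩]

/-- Every block of an SCC partition is a category. -/
lemma block_isCategory (hp : PosSCOn Finset.univ p) {P : Finset (Finset X)}
    (hP : IsSCCPart p P) {B : Finset X} (hB : B ∈ P) : IsCategory p B := by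
  obtain ⟨hPart, π, ω, σ, hπ, hω, hσ, hrep⟩ := hP
  have hπeq : ∀ {C : Finset X} {x : X}, C ∈ P → x ∈ C → π x = C := fun {C x} hC hx =>
    part_block_eq hPart (hπ x).1 hC (hπ x).2 hx
  have himgP : ∀ A : Finset X, A.image π ⊆ P := by
    intro A C hC
    obtain ⟨x, -, rfl⟩ := Finset.mem_image.mp hC
    exact (hπ x).1
  have hωpos : ∀ {𝓘 : Finset (Finset X)} {C : Finset X}, 𝓘 ⊆ P → C ∈ 𝓘 → 0 < ω C 𝓘 :=
    fun {𝓘 C} hsub hC => (hω.2 𝓘 ⟨C, hC⟩ hsub).2 C hC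
  constructor
  · -- CInd
    intro S hS a ha b hb E hE
    have hSB : ∀ x ∈ S, π x = B := fun x hx => hπeq hB (hS hx)
    have hEB : ∀ x ∈ E, x ∉ B := fun x hx => Finset.mem_compl.mp (hE hx)
    have hfS : S.filter (fun x => x ∈ π a) = S := by
      rw [hSB a ha]
      exact Finset.filter_true_of_mem fun x hx => hS hx
    have hfSE : (S ∪ E).filter (fun x => x ∈ π a) = S := by
      rw [hSB a ha]
      ext x
      simp only [Finset.mem_filter, Finset.mem_union]
      constructor
      · rintro ⟨hx | hx, hxB⟩
        · exact hx
        · exact absurd hxB (hEB x hx)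
      · intro hx
        exact ⟨Or.inl hx, hS hx⟩
    have hfSb : S.filter (fun x => x ∈ π b) = S := by rw [hπeq hB (hS hb)]; rw [hπeq hB (hS ha)] at hfS; exact hfS
    have hfSEb : (S ∪ E).filter (fun x => x ∈ π b) = S := by rw [hπeq hB (hS hb)]; rw [hπeq hB (hS ha)] at hfSE; exact hfSE
    have hpaS := hrep S ⟨a, ha⟩ a ha
    have hpbS := hrep S ⟨a, ha⟩ b hb
    have hpaSE := hrep (S ∪ E) ⟨a, Finset.mem_union_left _ ha⟩ a (Finset.mem_union_left _ ha)
    have hpbSE := hrep (S ∪ E) ⟨a, Finset.mem_union_left _ ha⟩ b (Finset.mem_union_left _ hb)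
    rw [hfS] at hpaS; rw [hfSb] at hpbS; rw [hfSE] at hpaSE; rw [hfSEb] at hpbSE
    rw [hπeq hB (hS ha)] at hpaS hpaSE
    rw [hπeq hB (hS hb)] at hpbS hpbSE
    have hω1 : ω B (S.image π) ≠ 0 :=
      (hωpos (himgP S) (Finset.mem_image.mpr ⟨a, ha, hπeq hB (hS ha)⟩)).ne'
    have hω2 : ω B ((S ∪ E).image π) ≠ 0 :=
      (hωpos (himgP (S ∪ E)) (Finset.mem_image.mpr
        ⟨a, Finset.mem_union_left _ ha, hπeq hB (hS ha)⟩)).ne'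
    rw [hpaS, hpbS, hpaSE, hpbSE, mul_div_mul_left _ _ hω1, mul_div_mul_left _ _ hω2]
  · -- CNeu
    intro E hE x hx S hS hSne
    have hSB : ∀ y ∈ S, π y = B := fun y hy => hπeq hB (hS hy)
    have hBB : ∀ y ∈ B, π y = B := fun y hy => hπeq hB hy
    have hEB : ∀ y ∈ E, y ∉ B := fun y hy => Finset.mem_compl.mp (hE hy)
    have hxB : x ∉ B := hEB x hx
    have hπxB : π x ≠ B := fun h => hxB (h ▸ (hπ x).2)
    have hdisj : ∀ y ∈ B, y ∉ π x := by
      intro y hy hy'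
      exact hπxB (part_block_eq hPart (hπ x).1 hB hy' hy)
    have hBne : B.Nonempty := hPart.1 B hB
    -- images agree
    have himg : (S ∪ E).image π = (B ∪ E).image π := by
      ext C
      simp only [Finset.mem_image, Finset.mem_union]
      constructor
      · rintro ⟨y, hy | hy, rfl⟩
        · exact ⟨hBne.choose, Or.inl hBne.choose_spec, by rw [hSB y hy, hBB _ hBne.choose_spec]⟩
        · exact ⟨y, Or.inr hy, rfl⟩
      · rintro ⟨y, hy | hy, rfl⟩
        · exact ⟨hSne.choose, Or.inl hSne.choose_spec, by rw [hBB y hy, hSB _ hSne.choose_spec]⟩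
        · exact ⟨y, Or.inr hy, rfl⟩
    -- filters agree
    have hfilt : (S ∪ E).filter (fun z => z ∈ π x) = (B ∪ E).filter (fun z => z ∈ π x) := by
      ext z
      simp only [Finset.mem_filter, Finset.mem_union]
      constructor
      · rintro ⟨hz | hz, hzπ⟩
        · exact absurd hzπ (hdisj z (hS hz))
        · exact ⟨Or.inr hz, hzπ⟩
      · rintro ⟨hz | hz, hzπ⟩
        · exact absurd hzπ (hdisj z hz)
        · exact ⟨Or.inr hz, hzπ⟩
    have h1 := hrep (S ∪ E) ⟨x, Finset.mem_union_right _ hx⟩ x (Finset.mem_union_right _ hx)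
    have h2 := hrep (B ∪ E) ⟨x, Finset.mem_union_right _ hx⟩ x (Finset.mem_union_right _ hx)
    rw [h1, h2, himg, hfilt]

end AuxSCC
section AuxNest

variable {X : Type*} [Fintype X] [DecidableEq X] {p : X → Finset X → ℝ}

/-- Two overlapping categories are nested. -/
lemma categories_nested (hp : PosSCOn Finset.univ p) {C D : Finset X}
    (hC : IsCategory p C) (hD : IsCategory p D) (hCD : (C ∩ D).Nonempty) :
    C ⊆ D ∨ D ⊆ C := by
  by_contra hcon
  push_neg at hcon
  obtain ⟨a, haC, haD⟩ := Finset.not_subset.mp hcon.1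
  obtain ⟨b, hbD, hbC⟩ := Finset.not_subset.mp hcon.2
  obtain ⟨z, hz⟩ := hCD
  have hzC : z ∈ C := (Finset.mem_inter.mp hz).1
  have hzD : z ∈ D := (Finset.mem_inter.mp hz).2
  have hab : a ≠ b := fun h => hbC (h ▸ haC)
  have hza : z ≠ a := fun h => haD (h ▸ hzD)
  have hzb : z ≠ b := fun h => hbC (h ▸ hzC)
  set M : Finset X := {a, b} with hM
  set M' : Finset X := {a, z, b} with hM'
  -- CNeu of C with E = {b}
  have hbCc : ({b} : Finset X) ⊆ Cᶜ := by
    simp [Finset.singleton_subset_iff, Finset.mem_compl, hbC]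
  have h1 : p b M = p b (C ∪ {b}) := by
    have := hC.2 {b} hbCc b (Finset.mem_singleton_self b) {a}
      (Finset.singleton_subset_iff.mpr haC) ⟨a, Finset.mem_singleton_self a⟩
    rw [← this]
    congr 1
  have h1' : p b M' = p b (C ∪ {b}) := by
    have hsub : ({a, z} : Finset X) ⊆ C := by
      intro x hx
      rcases Finset.mem_insert.mp hx with rfl | hx
      · exact haC
      · exact (Finset.mem_singleton.mp hx) ▸ hzC
    have := hC.2 {b} hbCc b (Finset.mem_singleton_self b) {a, z} hsub
      ⟨a, Finset.mem_insert_self a _⟩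
    rw [← this]
    congr 1
    ext x
    simp only [Finset.mem_union, Finset.mem_insert, Finset.mem_singleton, hM']
    tauto
  -- CNeu of D with E = {a}
  have haDc : ({a} : Finset X) ⊆ Dᶜ := by
    simp [Finset.singleton_subset_iff, Finset.mem_compl, haD]
  have h2 : p a M = p a (D ∪ {a}) := by
    have := hD.2 {a} haDc a (Finset.mem_singleton_self a) {b}
      (Finset.singleton_subset_iff.mpr hbD) ⟨b, Finset.mem_singleton_self b⟩
    rw [← this]
    congr 1
    ext x
    simp only [Finset.mem_union, Finset.mem_insert, Finset.mem_singleton, hM]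
    tauto
  have h2' : p a M' = p a (D ∪ {a}) := by
    have hsub : ({z, b} : Finset X) ⊆ D := by
      intro x hx
      rcases Finset.mem_insert.mp hx with rfl | hx
      · exact hzD
      · exact (Finset.mem_singleton.mp hx) ▸ hbD
    have := hD.2 {a} haDc a (Finset.mem_singleton_self a) {z, b} hsub
      ⟨z, Finset.mem_insert_self z _⟩
    rw [← this]
    congr 1
    ext x
    simp only [Finset.mem_union, Finset.mem_insert, Finset.mem_singleton, hM']
    tauto
  -- sums
  have hsum : p a M + p b M = 1 := by
    have := psum_one hp (A := M) ⟨a, by simp [hM]⟩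
    rwa [hM, Finset.sum_pair hab] at this
  have hsum' : p a M' + p z M' + p b M' = 1 := by
    have := psum_one hp (A := M') ⟨a, by simp [hM']⟩
    rw [hM'] at this
    rw [Finset.sum_insert (by simp [hza.symm, hab]), Finset.sum_insert (by simp [hzb])] at this
    rw [Finset.sum_singleton] at this
    linarith
  have hzpos : 0 < p z M' := ppos hp (by simp [hM'])
  rw [h1, h2] at hsum
  rw [h1', h2'] at hsum'
  linarith

end AuxNest
section AuxBuild

variable {X : Type*} [Fintype X] [DecidableEq X] {p : X → Finset X → ℝ}

lemma build_scc (hp : PosSCOn Finset.univ p) {Q : Finset (Finset X)} (hQ : IsPartition Q)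
    (π : X → Finset X) (hπ : ∀ x, π x ∈ Q ∧ x ∈ π x)
    (hcat : ∀ B ∈ Q, IsCategory p B) : IsSCCPart p Q := by
  have hπeq : ∀ {C : Finset X} {x : X}, C ∈ Q → x ∈ C → π x = C := fun {C x} hC hx =>
    part_block_eq hQ (hπ x).1 hC (hπ x).2 hx
  have hdisj : ∀ {B C : Finset X}, B ∈ Q → C ∈ Q → B ≠ C → Disjoint B C := by
    intro B C hB hC hBC
    rw [Finset.disjoint_left]
    intro x hxB hxC
    exact hBC (part_block_eq hQ hB hC hxB hxC)
  refine ⟨hQ, π, (fun B 𝓘 => if B ∈ 𝓘 then ∑ y ∈ B, p y (𝓘.sup id) else 0),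
    (fun _ a A => if a ∈ A then p a A else 0), hπ, ?_, ?_, ?_⟩
  · -- PosSCOn Q ω
    constructor
    · intro B 𝓘 hB
      exact if_neg hB
    · intro 𝓘 h𝓘ne h𝓘Q
      have hU : ∀ B ∈ 𝓘, B ⊆ 𝓘.sup id := fun B hB => Finset.le_sup (f := id) hB
      have hUsum : ∑ B ∈ 𝓘, ∑ y ∈ B, p y (𝓘.sup id) = 1 := by
        rw [← Finset.sum_biUnion, ← Finset.sup_eq_biUnion]
        · apply psum_one hp
          obtain ⟨B, hB⟩ := h𝓘ne
          obtain ⟨y, hy⟩ := hQ.1 B (h𝓘Q hB)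
          exact ⟨y, hU B hB hy⟩
        · intro B hB C hC hBC
          exact hdisj (h𝓘Q hB) (h𝓘Q hC) hBC
      constructor
      · rw [← hUsum]
        apply Finset.sum_congr rfl
        intro B hB
        show (if B ∈ 𝓘 then ∑ y ∈ B, p y (𝓘.sup id) else 0) = ∑ y ∈ B, p y (𝓘.sup id)
        rw [if_pos hB]
      · intro B hB
        show 0 < (if B ∈ 𝓘 then ∑ y ∈ B, p y (𝓘.sup id) else 0)
        rw [if_pos hB]
        apply Finset.sum_pos
        · intro y hy
          exact ppos hp (hU B hB hy)
        · exact hQ.1 B (h𝓘Q hB)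
  · -- σ positivity
    intro B hB
    constructor
    · intro y A hy
      exact if_neg hy
    · intro A hAne hAB
      constructor
      · rw [← psum_one hp hAne]
        apply Finset.sum_congr rfl
        intro y hy
        show (if y ∈ A then p y A else 0) = p y A
        rw [if_pos hy]
      · intro y hy
        show 0 < (if y ∈ A then p y A else 0)
        rw [if_pos hy]
        exact ppos hp hy
  · -- main equation
    intro A hAne a haA
    set B := π a with hBdef
    have hBQ : B ∈ Q := (hπ a).1
    have haB : a ∈ B := (hπ a).2
    set 𝓘 := A.image π with h𝓘def
    set U := 𝓘.sup id with hUdef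
    set S := A.filter (fun x => x ∈ B) with hSdef
    have haS : a ∈ S := Finset.mem_filter.mpr ⟨haA, haB⟩
    have hSB : S ⊆ B := fun x hx => (Finset.mem_filter.mp hx).2
    have hB𝓘 : B ∈ 𝓘 := Finset.mem_image.mpr ⟨a, haA, rfl⟩
    have h𝓘Q : 𝓘 ⊆ Q := by
      intro C hC
      obtain ⟨x, -, rfl⟩ := Finset.mem_image.mp hC
      exact (hπ x).1
    have hAU : A ⊆ U := by
      intro x hx
      rw [hUdef, Finset.sup_eq_biUnion]
      exact Finset.mem_biUnion.mpr ⟨π x, Finset.mem_image.mpr ⟨x, hx, rfl⟩, (hπ x).2⟩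
    have hBU : B ⊆ U := by
      intro x hx
      rw [hUdef, Finset.sup_eq_biUnion]
      exact Finset.mem_biUnion.mpr ⟨B, hB𝓘, hx⟩
    have hmemU : ∀ y ∈ U, ∃ C ∈ 𝓘, y ∈ C := by
      intro y hy
      rw [hUdef, Finset.sup_eq_biUnion] at hy
      obtain ⟨C, hC, hyC⟩ := Finset.mem_biUnion.mp hy
      exact ⟨C, hC, hyC⟩
    -- Step (i): p a A = (∑ b ∈ S, p b A) * p a S
    have hCIndB := (hcat B hBQ).1
    have step1 : p a A = (∑ b ∈ S, p b A) * p a S := by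
      have hE : A.filter (fun x => x ∉ B) ⊆ Bᶜ := by
        intro x hx
        exact Finset.mem_compl.mpr (Finset.mem_filter.mp hx).2
      have hSE : S ∪ A.filter (fun x => x ∉ B) = A := by
        rw [hSdef, Finset.filter_union_filter_not_eq]
      have key : ∀ b ∈ S, p a S * p b A = p a A * p b S := by
        intro b hb
        have hratio := hCIndB S hSB a haS b hb (A.filter (fun x => x ∉ B)) hE
        rw [hSE] at hratio
        have hbA : b ∈ A := (Finset.mem_filter.mp hb).1
        exact (div_eq_div_iff (ppos hp hb).ne' (ppos hp hbA).ne').mp hratio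
      have hsum := Finset.sum_congr rfl key
      rw [← Finset.mul_sum, ← Finset.mul_sum] at hsum
      rw [psum_one hp ⟨a, haS⟩, mul_one] at hsum
      rw [← hsum, mul_comm]
    -- Step (ii): ∑ b ∈ S, p b A = ∑ y ∈ B, p y U
    have step2 : (∑ b ∈ S, p b A) = ∑ y ∈ B, p y U := by
      -- expansion: adding whole blocks ≠ B doesn't change probs of elements of S
      have expand : ∀ 𝓙 : Finset (Finset X), 𝓙 ⊆ 𝓘.erase B →
          ∀ b ∈ S, p b (A ∪ 𝓙.sup id) = p b A := by
        intro 𝓙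
        induction 𝓙 using Finset.induction_on with
        | empty => intro _ b _; simp
        | @insert C 𝓙 hC𝓙 ih =>
          intro hsub b hbS
          have hCmem : C ∈ 𝓘.erase B := hsub (Finset.mem_insert_self _ _)
          have h𝓙sub : 𝓙 ⊆ 𝓘.erase B := fun D hD => hsub (Finset.mem_insert_of_mem hD)
          have hCB : C ≠ B := (Finset.mem_erase.mp hCmem).1
          have hC𝓘 : C ∈ 𝓘 := (Finset.mem_erase.mp hCmem).2
          have hCQ : C ∈ Q := h𝓘Q hC𝓘
          set M := A ∪ 𝓙.sup id with hMdef
          -- M ∩ C = A ∩ C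
          have hMC : ∀ x ∈ M, x ∈ C → x ∈ A := by
            intro x hxM hxC
            rcases Finset.mem_union.mp hxM with hx | hx
            · exact hx
            · rw [Finset.sup_eq_biUnion] at hx
              obtain ⟨D, hD𝓙, hxD⟩ := Finset.mem_biUnion.mp hx
              have hDC : D ≠ C := fun h => hC𝓙 (h ▸ hD𝓙)
              exact absurd (part_block_eq hQ (h𝓘Q (Finset.mem_erase.mp (h𝓙sub hD𝓙)).2)
                hCQ hxD hxC) hDC
          have hSC : A.filter (fun x => x ∈ C) ⊆ C := fun x hx => (Finset.mem_filter.mp hx).2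
          have hSCne : (A.filter (fun x => x ∈ C)).Nonempty := by
            obtain ⟨x, hxA, hxC⟩ := Finset.mem_image.mp hC𝓘
            exact ⟨x, Finset.mem_filter.mpr ⟨hxA, hxC ▸ (hπ x).2⟩⟩
          have hEC : M.filter (fun x => x ∉ C) ⊆ Cᶜ := by
            intro x hx
            exact Finset.mem_compl.mpr (Finset.mem_filter.mp hx).2
          have hbM : b ∈ M := Finset.mem_union_left _ (Finset.mem_filter.mp hbS).1
          have hbC : b ∉ C := by
            intro hbC
            exact hCB (part_block_eq hQ hCQ hBQ hbC (Finset.mem_filter.mp hbS).2)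
          have hbE : b ∈ M.filter (fun x => x ∉ C) := Finset.mem_filter.mpr ⟨hbM, hbC⟩
          have hneu := (hcat C hCQ).2 (M.filter (fun x => x ∉ C)) hEC b hbE
            (A.filter (fun x => x ∈ C)) hSC hSCne
          have hu1 : A.filter (fun x => x ∈ C) ∪ M.filter (fun x => x ∉ C) = M := by
            ext x
            simp only [Finset.mem_union, Finset.mem_filter]
            constructor
            · rintro (⟨hx, -⟩ | ⟨hx, -⟩)
              · exact Finset.mem_union_left _ hx
              · exact hx
            · intro hx
              by_cases hxC : x ∈ C
              · exact Or.inl ⟨hMC x hx hxC, hxC⟩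
              · exact Or.inr ⟨hx, hxC⟩
          have hu2 : C ∪ M.filter (fun x => x ∉ C) = M ∪ C := by
            ext x
            simp only [Finset.mem_union, Finset.mem_filter]
            tauto
          rw [hu1, hu2] at hneu
          have hMC' : A ∪ (insert C 𝓙).sup id = M ∪ C := by
            rw [Finset.sup_insert, hMdef]
            show A ∪ (id C ⊔ 𝓙.sup id) = A ∪ 𝓙.sup id ∪ C
            rw [id_eq, Finset.sup_eq_union, Finset.union_comm C, ← Finset.union_assoc]
          rw [hMC', ← hneu]
          exact ih h𝓙sub b hbS
      set V := A ∪ (𝓘.erase B).sup id with hVdef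
      have hVeq : ∀ b ∈ S, p b V = p b A := expand _ (le_refl _)
      -- V ∩ B = S
      have hVB : ∀ x ∈ V, x ∈ B → x ∈ S := by
        intro x hxV hxB
        rcases Finset.mem_union.mp hxV with hx | hx
        · exact Finset.mem_filter.mpr ⟨hx, hxB⟩
        · rw [Finset.sup_eq_biUnion] at hx
          obtain ⟨D, hD, hxD⟩ := Finset.mem_biUnion.mp hx
          exact absurd (part_block_eq hQ (h𝓘Q (Finset.mem_erase.mp hD).2) hBQ hxD hxB)
            (Finset.mem_erase.mp hD).1
      have hmemU' : ∀ C ∈ 𝓘, C ⊆ U := by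
        intro C hC x hx
        rw [hUdef, Finset.sup_eq_biUnion]
        exact Finset.mem_biUnion.mpr ⟨C, hC, hx⟩
      -- V ∪ B = U
      have hVU : V ∪ B = U := by
        ext x
        constructor
        · intro hx
          rcases Finset.mem_union.mp hx with hx | hx
          · rcases Finset.mem_union.mp hx with hx | hx
            · exact hAU hx
            · rw [Finset.sup_eq_biUnion] at hx
              obtain ⟨D, hD, hxD⟩ := Finset.mem_biUnion.mp hx
              refine hmemU' _ (Finset.mem_erase.mp hD).2 hxD
          · exact hBU hx
        · intro hx
          obtain ⟨D, hD, hxD⟩ := hmemU x hx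
          by_cases hDB : D = B
          · exact Finset.mem_union_right _ (hDB ▸ hxD)
          · refine Finset.mem_union_left _ (Finset.mem_union_right _ ?_)
            rw [Finset.sup_eq_biUnion]
            exact Finset.mem_biUnion.mpr ⟨D, Finset.mem_erase.mpr ⟨hDB, hD⟩, hxD⟩
      -- for x ∈ V \ B : p x V = p x U
      have hVout : ∀ x ∈ V.filter (fun x => x ∉ B), p x V = p x U := by
        intro x hx
        obtain ⟨hxV, hxB⟩ := Finset.mem_filter.mp hx
        have hEB : V.filter (fun x => x ∉ B) ⊆ Bᶜ := by
          intro y hy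
          exact Finset.mem_compl.mpr (Finset.mem_filter.mp hy).2
        have hneu := (hcat B hBQ).2 (V.filter (fun x => x ∉ B)) hEB x hx S hSB ⟨a, haS⟩
        have hu1 : S ∪ V.filter (fun x => x ∉ B) = V := by
          ext y
          simp only [Finset.mem_union, Finset.mem_filter]
          constructor
          · rintro (hy | ⟨hy, -⟩)
            · exact Finset.mem_union_left _ (Finset.mem_filter.mp hy).1
            · exact hy
          · intro hy
            by_cases hyB : y ∈ B
            · exact Or.inl (hVB y hy hyB)
            · exact Or.inr ⟨hy, hyB⟩
        have hu2 : B ∪ V.filter (fun x => x ∉ B) = U := by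
          rw [← hVU]
          ext y
          simp only [Finset.mem_union, Finset.mem_filter]
          tauto
        rw [hu1, hu2] at hneu
        exact hneu
      -- assemble
      have hsplitV : (∑ b ∈ S, p b V) + ∑ x ∈ V.filter (fun x => x ∉ B), p x V = 1 := by
        have := Finset.sum_filter_add_sum_filter_not V (fun x => x ∈ B) (fun x => p x V)
        rw [psum_one hp ⟨a, Finset.mem_union_left _ haA⟩] at this
        have hfV : V.filter (fun x => x ∈ B) = S := by
          ext x
          simp only [Finset.mem_filter]
          constructor
          · rintro ⟨hxV, hxB⟩
            exact hVB x hxV hxB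
          · intro hx
            have hx' := Finset.mem_filter.mp hx
            exact ⟨Finset.mem_union_left _ hx'.1, hx'.2⟩
        rwa [hfV] at this
      have hsplitU : (∑ y ∈ B, p y U) + ∑ x ∈ U.filter (fun x => x ∉ B), p x U = 1 := by
        have := Finset.sum_filter_add_sum_filter_not U (fun x => x ∈ B) (fun x => p x U)
        rw [psum_one hp ⟨a, hAU haA⟩] at this
        have hfU : U.filter (fun x => x ∈ B) = B := by
          ext x
          simp only [Finset.mem_filter]
          exact ⟨fun h => h.2, fun h => ⟨hBU h, h⟩⟩
        rwa [hfU] at this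
      have hfVU : V.filter (fun x => x ∉ B) = U.filter (fun x => x ∉ B) := by
        ext x
        simp only [Finset.mem_filter]
        constructor
        · rintro ⟨hxV, hxB⟩
          exact ⟨hVU ▸ Finset.mem_union_left _ hxV, hxB⟩
        · rintro ⟨hxU, hxB⟩
          rcases Finset.mem_union.mp (hVU ▸ hxU : x ∈ V ∪ B) with hx | hx
          · exact ⟨hx, hxB⟩
          · exact absurd hx hxB
      have hout : ∑ x ∈ V.filter (fun x => x ∉ B), p x V
          = ∑ x ∈ U.filter (fun x => x ∉ B), p x U := by
        rw [Finset.sum_congr rfl hVout, hfVU]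
      have : (∑ b ∈ S, p b V) = ∑ y ∈ B, p y U := by linarith
      rw [← this]
      exact (Finset.sum_congr rfl hVeq).symm
    show p a A = (if B ∈ 𝓘 then ∑ y ∈ B, p y (𝓘.sup id) else 0) * (if a ∈ S then p a S else 0)
    rw [if_pos hB𝓘, if_pos haS, step1, step2]

end AuxBuild
section AuxFinal

variable {X : Type*} [Fintype X] [DecidableEq X] {p : X → Finset X → ℝ}

/-- Sum of block cardinalities of a partition is the cardinality of the ground set. -/
lemma part_card_sum {Q : Finset (Finset X)} (hQ : IsPartition Q) :
    ∑ B ∈ Q, B.card = Fintype.card X := by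
  have huniv : Q.biUnion (fun B => B) = Finset.univ := by
    ext x
    simp only [Finset.mem_biUnion, id_eq, Finset.mem_univ, iff_true]
    obtain ⟨B, hB, -⟩ := hQ.2 x
    exact ⟨B, hB.1, hB.2⟩
  rw [← Finset.card_biUnion, huniv, Finset.card_univ]
  intro B hB C hC hBC
  rw [Function.onFun, Finset.disjoint_left]
  intro x hxB hxC
  exact hBC (part_block_eq hQ hB hC hxB hxC)

/-- A partition with a block of size ≥ 2 has fewer than |X| blocks. -/
lemma part_card_lt {Q : Finset (Finset X)} (hQ : IsPartition Q) {B₀ : Finset X}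
    (hB₀ : B₀ ∈ Q) (h2 : 2 ≤ B₀.card) : Q.card < Fintype.card X := by
  have h : ∑ B ∈ Q, (1 : ℕ) < ∑ B ∈ Q, B.card := by
    apply Finset.sum_lt_sum
    · intro B hB
      exact Finset.card_pos.mpr (hQ.1 B hB)
    · exact ⟨B₀, hB₀, by omega⟩
  rwa [Finset.sum_const, smul_eq_mul, mul_one, part_card_sum hQ] at h

/-- A partition with fewer than |X| blocks has a block of size ≥ 2. -/
lemma part_big_block {Q : Finset (Finset X)} (hQ : IsPartition Q)
    (hlt : Q.card < Fintype.card X) : ∃ B ∈ Q, 2 ≤ B.card := by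
  by_contra h
  push_neg at h
  have hall : ∀ B ∈ Q, B.card = 1 := by
    intro B hB
    have h1 := Finset.card_pos.mpr (hQ.1 B hB)
    have h2 := h B hB
    omega
  have hs := part_card_sum hQ
  rw [Finset.sum_congr rfl hall, Finset.sum_const, smul_eq_mul, mul_one] at hs
  omega

end AuxFinal
/-- among all partitions making `p` a non-degenerate SCC, there is a unique
coarsest one, and every other such partition refines it. -/
theorem stmt3 {X : Type*} [Fintype X] [DecidableEq X]
    (p : X → Finset X → ℝ) (hcard : 3 ≤ Fintype.card X)
    (hp : PosSCOn Finset.univ p)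
    (hne : ∃ P : Finset (Finset X), IsSCCPart p P ∧ NonDegPart P) :
    ∃! P : Finset (Finset X), (IsSCCPart p P ∧ NonDegPart P) ∧
      ∀ P' : Finset (Finset X), IsSCCPart p P' ∧ NonDegPart P' →
        ∀ B' ∈ P', ∃ B ∈ P, B' ⊆ B := by
  classical
  obtain ⟨P₀, hP₀⟩ := hne
  set Good : Finset X → Prop := fun B => ∃ P : Finset (Finset X),
    (IsSCCPart p P ∧ NonDegPart P) ∧ B ∈ P with hGooddef
  have hGoodCat : ∀ B, Good B → IsCategory p B := by
    rintro B ⟨P, ⟨hP, -⟩, hBP⟩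
    exact block_isCategory hp hP hBP
  have hTne : ∀ x : X, (Finset.univ.filter fun B : Finset X => Good B ∧ x ∈ B).Nonempty := by
    intro x
    obtain ⟨B, hB, -⟩ := hP₀.1.1.2 x
    exact ⟨B, Finset.mem_filter.mpr ⟨Finset.mem_univ _, ⟨P₀, hP₀, hB.1⟩, hB.2⟩⟩
  choose Bs hBs hBsmax using fun x : X =>
    Finset.exists_max_image (Finset.univ.filter fun B : Finset X => Good B ∧ x ∈ B)
      Finset.card (hTne x)
  have hBsGood : ∀ x, Good (Bs x) := fun x => (Finset.mem_filter.mp (hBs x)).2.1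
  have hBsmem : ∀ x, x ∈ Bs x := fun x => (Finset.mem_filter.mp (hBs x)).2.2
  have hmax : ∀ x B, Good B → x ∈ B → B ⊆ Bs x := by
    intro x B hB hxB
    have hcard' : B.card ≤ (Bs x).card :=
      hBsmax x B (Finset.mem_filter.mpr ⟨Finset.mem_univ _, hB, hxB⟩)
    rcases categories_nested hp (hGoodCat B hB) (hGoodCat _ (hBsGood x))
      ⟨x, Finset.mem_inter.mpr ⟨hxB, hBsmem x⟩⟩ with h | h
    · exact h
    · rw [Finset.eq_of_subset_of_card_le h hcard']
  have hBB : ∀ x y, x ∈ Bs y → Bs y = Bs x := by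
    intro x y hx
    have h1 : Bs y ⊆ Bs x := hmax x _ (hBsGood y) hx
    have h2 : Bs x ⊆ Bs y := hmax y _ (hBsGood x) (h1 (hBsmem y))
    exact Finset.Subset.antisymm h1 h2
  set Pstar := Finset.univ.image Bs with hPstardef
  have hBsP : ∀ x, Bs x ∈ Pstar := fun x => Finset.mem_image.mpr ⟨x, Finset.mem_univ x, rfl⟩
  have hmemPstar : ∀ B ∈ Pstar, ∃ x, Bs x = B := by
    intro B hB
    obtain ⟨x, -, hx⟩ := Finset.mem_image.mp hB
    exact ⟨x, hx⟩
  have hPart : IsPartition Pstar := by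
    constructor
    · intro B hB
      obtain ⟨x, rfl⟩ := hmemPstar B hB
      exact ⟨x, hBsmem x⟩
    · intro x
      refine ⟨Bs x, ⟨hBsP x, hBsmem x⟩, ?_⟩
      rintro B ⟨hBP, hxB⟩
      obtain ⟨y, rfl⟩ := hmemPstar B hBP
      exact hBB x y hxB
  have hSCC : IsSCCPart p Pstar := by
    apply build_scc hp hPart Bs (fun x => ⟨hBsP x, hBsmem x⟩)
    intro B hB
    obtain ⟨x, rfl⟩ := hmemPstar B hB
    exact hGoodCat _ (hBsGood x)
  -- nondegeneracy
  obtain ⟨B₀, hB₀P₀, hB₀2⟩ := part_big_block hP₀.1.1 hP₀.2.2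
  obtain ⟨x₀, hx₀⟩ := hP₀.1.1.1 B₀ hB₀P₀
  have hB₀Good : Good B₀ := ⟨P₀, hP₀, hB₀P₀⟩
  have hupper : Pstar.card < Fintype.card X :=
    part_card_lt hPart (hBsP x₀)
      (le_trans hB₀2 (Finset.card_le_card (hmax x₀ B₀ hB₀Good hx₀)))
  have hlower : 1 < Pstar.card := by
    obtain ⟨P', ⟨hP'scc, hP'nd⟩, hBsx₀P'⟩ := hBsGood x₀
    obtain ⟨C, hCP', hCne⟩ := Finset.exists_mem_ne hP'nd.1 (Bs x₀)
    obtain ⟨y, hy⟩ := hP'scc.1.1 C hCP'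
    have hyBs : y ∉ Bs x₀ := by
      intro hy'
      exact hCne (part_block_eq hP'scc.1 hCP' hBsx₀P' hy hy')
    refine Finset.one_lt_card.mpr ⟨Bs x₀, hBsP x₀, Bs y, hBsP y, ?_⟩
    intro h
    exact hyBs (h ▸ hBsmem y)
  have hnd : NonDegPart Pstar := ⟨hlower, hupper⟩
  have hcoarse : ∀ P' : Finset (Finset X), IsSCCPart p P' ∧ NonDegPart P' →
      ∀ B' ∈ P', ∃ B ∈ Pstar, B' ⊆ B := by
    intro P' hP' B' hB'
    obtain ⟨x, hx⟩ := hP'.1.1.1 B' hB'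
    exact ⟨Bs x, hBsP x, hmax x B' ⟨P', hP', hB'⟩ hx⟩
  have hsub : ∀ Q R : Finset (Finset X), IsPartition Q →
      (∀ B' ∈ R, ∃ B ∈ Q, B' ⊆ B) → (∀ B' ∈ Q, ∃ B ∈ R, B' ⊆ B) → Q ⊆ R := by
    intro Q R hQ hQc hRc B hBQ
    obtain ⟨C, hCR, hBC⟩ := hRc B hBQ
    obtain ⟨D, hDQ, hCD⟩ := hQc C hCR
    obtain ⟨x, hx⟩ := hQ.1 B hBQ
    have hBD : B = D := part_block_eq hQ hBQ hDQ hx (hCD (hBC hx))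
    have hBCeq : B = C := Finset.Subset.antisymm hBC (hBD ▸ hCD)
    rwa [hBCeq]
  refine ⟨Pstar, ⟨⟨hSCC, hnd⟩, hcoarse⟩, ?_⟩
  rintro P' ⟨⟨hP'scc, hP'nd⟩, hP'coarse⟩
  apply Finset.Subset.antisymm
  · exact hsub P' Pstar hP'scc.1 (hP'coarse Pstar ⟨hSCC, hnd⟩) (hcoarse P' ⟨hP'scc, hP'nd⟩)
  · exact hsub Pstar P' hPart (hcoarse P' ⟨hP'scc, hP'nd⟩) (hP'coarse Pstar ⟨hSCC, hnd⟩)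
end

section
/- If C and D are distinct non-trivial categories for a positive stochastic choice p on X and C ∩ D ≠ ∅, then C ⊆ D or D ⊆ C. -/
open Finset
open scoped Classical

/-- distinct non-trivial categories with nonempty intersection are nested. -/
theorem stmt4 {X : Type*} [Fintype X] [DecidableEq X]
    (p : X → Finset X → ℝ) (hcard : 3 ≤ Fintype.card X)
    (hp : PosSCOn Finset.univ p)
    (C D : Finset X) (hC : IsCategory p C) (hD : IsCategory p D)
    (hCn : NonTrivialSet C) (hDn : NonTrivialSet D)
    (hne : C ≠ D) (hint : (C ∩ D).Nonempty) :
    C ⊆ D ∨ D ⊆ C := by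
  by_contra hcon
  push_neg at hcon
  obtain ⟨hCD, hDC⟩ := hcon
  obtain ⟨b, hbC, hbD⟩ := Finset.not_subset.mp hCD
  obtain ⟨c, hcD, hcC⟩ := Finset.not_subset.mp hDC
  obtain ⟨a, haCD⟩ := hint
  have haC : a ∈ C := (Finset.mem_inter.mp haCD).1
  have haD : a ∈ D := (Finset.mem_inter.mp haCD).2
  have hab : a ≠ b := fun h => hbD (h ▸ haD)
  have hac : a ≠ c := fun h => hcC (h ▸ haC)
  have hbc : b ≠ c := fun h => hcC (h ▸ hbC)
  -- sets
  have hA2eq : ({a} : Finset X) ∪ {b} = {a, b} := by ext x; simp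
  have hA3eq : ({a, c} : Finset X) ∪ {b} = {a, b, c} := by
    ext x; simp; tauto
  have hA3eq' : ({a, b} : Finset X) ∪ {c} = {a, b, c} := by
    ext x; simp
  -- D-NEU: p b {a,b} = p b {a,b,c}
  have hSb1 : ({b} : Finset X) ⊆ Dᶜ := by simp [hbD]
  have hneu1 := hD.2 {b} hSb1 b (by simp) {a} (by simp [haD]) (by simp)
  have hneu2 := hD.2 {b} hSb1 b (by simp) {a, c}
    (by intro x hx; simp at hx; rcases hx with h | h <;> simp [h, haD, hcD])
    (by simp)
  rw [hA2eq] at hneu1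
  rw [hA3eq] at hneu2
  have hb23 : p b {a, b} = p b {a, b, c} := by rw [hneu1, hneu2]
  -- C-IND: ratio
  have hind := hC.1 {a, b}
    (by intro x hx; simp at hx; rcases hx with h | h <;> simp [h, haC, hbC])
    a (by simp) b (by simp) {c} (by simp [hcC])
  rw [hA3eq'] at hind
  -- positivity facts
  obtain ⟨hzero, hpos⟩ := hp
  have h2 := hpos {a, b} ⟨a, by simp⟩ (Finset.subset_univ _)
  have h3 := hpos {a, b, c} ⟨a, by simp⟩ (Finset.subset_univ _)
  have hb2pos : 0 < p b {a, b} := h2.2 b (by simp)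
  have hb3pos : 0 < p b {a, b, c} := h3.2 b (by simp)
  have ha23 : p a {a, b} = p a {a, b, c} := by
    rw [hb23, div_eq_div_iff (ne_of_gt hb3pos) (ne_of_gt hb3pos)] at hind
    exact mul_right_cancel₀ (ne_of_gt hb3pos) hind
  -- sums
  have hsum2 : p a {a, b} + p b {a, b} = 1 := by
    have := h2.1
    rwa [Finset.sum_pair hab] at this
  have hsum3 : p a {a, b, c} + p b {a, b, c} + p c {a, b, c} = 1 := by
    have := h3.1
    rw [Finset.sum_insert (by simp [hab, hac]), Finset.sum_pair hbc] at this
    linarith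
  have hcpos : 0 < p c {a, b, c} := h3.2 c (by simp)
  rw [ha23, hb23] at hsum2
  linarith
end

section
/- If G and H are weak categories for a positive stochastic choice p and G ∩ H ≠ ∅, then G ∩ H is also a weak category. -/
open Finset
open scoped Classical

/-- the intersection of two weak categories is a weak category. -/
theorem stmt5 {X : Type*} [Fintype X] [DecidableEq X]
    (p : X → Finset X → ℝ) (hp : PosSCOn Finset.univ p)
    (G H : Finset X) (hG : CInd p G) (hH : CInd p H)
    (hGH : (G ∩ H).Nonempty) :
    CInd p (G ∩ H) := by
  intro S hS a ha b hb E hE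
  have hSG : S ⊆ G := hS.trans (Finset.inter_subset_left)
  have hSH : S ⊆ H := hS.trans (Finset.inter_subset_right)
  have h2 : (E ∩ G) ⊆ Hᶜ := by
    intro x hx
    simp only [Finset.mem_inter] at hx
    have := hE hx.1
    simp only [Finset.mem_compl, Finset.mem_inter] at this ⊢
    tauto
  have h1 : (E \ G) ⊆ Gᶜ := by
    intro x hx
    simp only [Finset.mem_sdiff] at hx
    simpa using hx.2
  have step1 := hH S hSH a ha b hb (E ∩ G) h2
  have step2 := hG (S ∪ E ∩ G) (Finset.union_subset hSG Finset.inter_subset_right)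
    a (Finset.mem_union_left _ ha) b (Finset.mem_union_left _ hb) (E \ G) h1
  have hset : S ∪ E ∩ G ∪ E \ G = S ∪ E := by
    ext x
    simp only [Finset.mem_union, Finset.mem_inter, Finset.mem_sdiff]
    tauto
  rw [step1, step2, hset]
end

section
/- A positive stochastic choice p on X is a non-degenerate SCC if and only if there exists a non-trivial category C in X (i.e., a set C with 1 < |C| < |X| satisfying C-IND and C-NEU). -/
open Finset
open scoped Classical

private lemma fwd_dir {X : Type*} [Fintype X] [DecidableEq X]
    (p : X → Finset X → ℝ) (hp : PosSCOn Finset.univ p)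
    (P : Finset (Finset X)) (hSCC : IsSCCPart p P) (hnd : NonDegPart P) :
    ∃ C : Finset X, NonTrivialSet C ∧ IsCategory p C := by
  obtain ⟨hPart, π, ω, σ, hπ, hω, hσ, heq⟩ := hSCC
  have hpos : ∀ A : Finset X, A.Nonempty → ∀ y ∈ A, 0 < p y A :=
    fun A hA => (hp.2 A hA (Finset.subset_univ A)).2
  have hblock : ∀ {x : X} {B : Finset X}, B ∈ P → x ∈ B → π x = B := by
    intro x B hB hx
    obtain ⟨B', _, huniq⟩ := hPart.2 x
    rw [huniq (π x) ⟨(hπ x).1, (hπ x).2⟩, huniq B ⟨hB, hx⟩]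
  -- there is a block with at least two elements
  obtain ⟨B, hB, hB2⟩ : ∃ B ∈ P, 2 ≤ B.card := by
    by_contra h
    push_neg at h
    have hinj : Function.Injective π := by
      intro x y hxy
      have hc : (π y).card ≤ 1 := Nat.lt_succ_iff.mp (h _ (hπ y).1)
      exact Finset.card_le_one.mp hc x (hxy ▸ (hπ x).2) y (hπ y).2
    have h1 : (Finset.univ.image π).card = Fintype.card X := by
      rw [Finset.card_image_of_injective _ hinj, Finset.card_univ]
    have h2 : Finset.univ.image π ⊆ P := by
      intro B hB
      obtain ⟨x, _, rfl⟩ := Finset.mem_image.mp hB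
      exact (hπ x).1
    have := Finset.card_le_card h2
    have hnd2 := hnd.2
    omega
  refine ⟨B, ⟨by omega, ?_⟩, ?_, ?_⟩
  · -- B.card < Fintype.card X
    obtain ⟨B', hB', hne⟩ := Finset.exists_mem_ne hnd.1 B
    obtain ⟨y, hy⟩ := hPart.1 B' hB'
    have hyB : y ∉ B := fun hyB => hne (by rw [← hblock hB' hy, hblock hB hyB])
    have : B ⊂ Finset.univ :=
      Finset.ssubset_univ_iff.mpr (fun h => hyB (h ▸ Finset.mem_univ y))
    simpa [Finset.card_univ] using Finset.card_lt_card this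
  · -- CInd
    intro S hS a ha b hb E hE
    have hπa : π a = B := hblock hB (hS ha)
    have hπb : π b = B := hblock hB (hS hb)
    have hfS : S.filter (fun x => x ∈ B) = S :=
      Finset.filter_true_of_mem (fun x hx => hS hx)
    have hfSE : (S ∪ E).filter (fun x => x ∈ B) = S := by
      ext x
      simp only [Finset.mem_filter, Finset.mem_union]
      constructor
      · rintro ⟨hx | hx, hxB⟩
        · exact hx
        · exact absurd hxB (Finset.mem_compl.mp (hE hx))
      · exact fun hx => ⟨Or.inl hx, hS hx⟩
    have hSne : S.Nonempty := ⟨a, ha⟩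
    have hSEne : (S ∪ E).Nonempty := ⟨a, Finset.mem_union_left E ha⟩
    have e1 := heq S hSne a ha
    have e2 := heq S hSne b hb
    have e3 := heq (S ∪ E) hSEne a (Finset.mem_union_left E ha)
    have e4 := heq (S ∪ E) hSEne b (Finset.mem_union_left E hb)
    rw [hπa, hfSE] at e3
    rw [hπb, hfSE] at e4
    rw [hπa, hfS] at e1
    rw [hπb, hfS] at e2
    have hne2 : ω B (S.image π) * σ B b S ≠ 0 := e2 ▸ (hpos S hSne b hb).ne'
    have hne4 : ω B ((S ∪ E).image π) * σ B b S ≠ 0 :=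
      e4 ▸ (hpos _ hSEne b (Finset.mem_union_left E hb)).ne'
    rw [e1, e2, e3, e4, mul_div_mul_left _ _ (left_ne_zero_of_mul hne2),
      mul_div_mul_left _ _ (left_ne_zero_of_mul hne4)]
  · -- CNeu
    intro E hE x hx S hS hSne
    have hxB : x ∉ B := Finset.mem_compl.mp (hE hx)
    have hπxB : π x ≠ B := fun h => hxB (h ▸ (hπ x).2)
    have hdis : ∀ y ∈ B, y ∉ π x := fun y hy hy' =>
      hπxB ((hblock (hπ x).1 hy').symm.trans (hblock hB hy))
    have hfilt : ∀ T ⊆ B, (T ∪ E).filter (fun z => z ∈ π x) =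
        E.filter (fun z => z ∈ π x) := by
      intro T hT
      ext z
      simp only [Finset.mem_filter, Finset.mem_union]
      constructor
      · rintro ⟨hz | hz, hzx⟩
        · exact absurd hzx (hdis z (hT hz))
        · exact ⟨hz, hzx⟩
      · rintro ⟨hz, hzx⟩
        exact ⟨Or.inr hz, hzx⟩
    have himgT : ∀ T ⊆ B, T.Nonempty → T.image π = {B} := by
      intro T hT hTne
      ext y
      simp only [Finset.mem_image, Finset.mem_singleton]
      constructor
      · rintro ⟨z, hz, rfl⟩
        exact hblock hB (hT hz)
      · rintro rfl
        obtain ⟨z, hz⟩ := hTne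
        exact ⟨z, hz, hblock hB (hT hz)⟩
    have himg : (S ∪ E).image π = (B ∪ E).image π := by
      rw [Finset.image_union, Finset.image_union, himgT S hS hSne,
        himgT B le_rfl (hPart.1 B hB)]
    have e1 := heq (S ∪ E) ⟨x, Finset.mem_union_right S hx⟩ x (Finset.mem_union_right S hx)
    have e2 := heq (B ∪ E) ⟨x, Finset.mem_union_right B hx⟩ x (Finset.mem_union_right B hx)
    rw [e1, e2, hfilt S hS, hfilt B le_rfl, himg]

private lemma bwd_dir {X : Type*} [Fintype X] [DecidableEq X]
    (p : X → Finset X → ℝ) (hp : PosSCOn Finset.univ p)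
    (C : Finset X) (hC : NonTrivialSet C) (hcat : IsCategory p C) :
    ∃ P : Finset (Finset X), IsSCCPart p P ∧ NonDegPart P := by
  classical
  obtain ⟨hC1, hC2⟩ := hC
  obtain ⟨hind, hneu⟩ := hcat
  have hCne : C.Nonempty := Finset.card_pos.mp (by omega)
  have hCsing : ∀ x : X, C ≠ {x} := by
    intro x h
    rw [h, Finset.card_singleton] at hC1
    omega
  have hsum1 : ∀ A : Finset X, A.Nonempty → ∑ y ∈ A, p y A = 1 :=
    fun A hA => (hp.2 A hA (Finset.subset_univ A)).1
  have hpos : ∀ A : Finset X, A.Nonempty → ∀ y ∈ A, 0 < p y A :=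
    fun A hA => (hp.2 A hA (Finset.subset_univ A)).2
  have hdisjCE : ∀ E ⊆ Cᶜ, Disjoint C E := fun E hE =>
    Finset.disjoint_left.mpr (fun x hx hx' => Finset.mem_compl.mp (hE hx') hx)
  -- the key consequence of C-IND and C-NEU
  have keyC : ∀ S, S ⊆ C → ∀ E, E ⊆ Cᶜ → ∀ a ∈ S,
      p a (S ∪ E) = (1 - ∑ x ∈ E, p x (C ∪ E)) * p a S := by
    intro S hS E hE a ha
    have hSne : S.Nonempty := ⟨a, ha⟩
    have hSEne : (S ∪ E).Nonempty := ⟨a, Finset.mem_union_left E ha⟩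
    have hdisj : Disjoint S E := (hdisjCE E hE).mono_left hS
    have hcross : ∀ b ∈ S, p a (S ∪ E) * p b S = p a S * p b (S ∪ E) := by
      intro b hb
      have h := hind S hS a ha b hb E hE
      have hb1 : p b S ≠ 0 := (hpos S hSne b hb).ne'
      have hb2 : p b (S ∪ E) ≠ 0 := (hpos _ hSEne b (Finset.mem_union_left E hb)).ne'
      rw [div_eq_div_iff hb1 hb2] at h
      exact h.symm
    have hsumS : p a (S ∪ E) = p a S * ∑ b ∈ S, p b (S ∪ E) := by
      calc p a (S ∪ E) = p a (S ∪ E) * ∑ b ∈ S, p b S := by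
            rw [hsum1 S hSne, mul_one]
        _ = ∑ b ∈ S, p a (S ∪ E) * p b S := by rw [Finset.mul_sum]
        _ = ∑ b ∈ S, p a S * p b (S ∪ E) := Finset.sum_congr rfl hcross
        _ = p a S * ∑ b ∈ S, p b (S ∪ E) := by rw [Finset.mul_sum]
    have hsplit : ∑ b ∈ S, p b (S ∪ E) = 1 - ∑ x ∈ E, p x (S ∪ E) := by
      have h := hsum1 (S ∪ E) hSEne
      rw [Finset.sum_union hdisj] at h
      linarith
    have hEneu : ∑ x ∈ E, p x (S ∪ E) = ∑ x ∈ E, p x (C ∪ E) :=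
      Finset.sum_congr rfl fun x hx => hneu E hE x hx S hS hSne
    rw [hsumS, hsplit, hEneu, mul_comm]
  -- the partition
  set P : Finset (Finset X) := insert C ((Finset.univ \ C).image fun x => ({x} : Finset X))
    with hPdef
  have hmemP : ∀ B : Finset X, B ∈ P ↔ B = C ∨ ∃ x, x ∉ C ∧ B = {x} := by
    intro B
    simp only [hPdef, Finset.mem_insert, Finset.mem_image, Finset.mem_sdiff,
      Finset.mem_univ, true_and]
    constructor
    · rintro (rfl | ⟨x, hx, rfl⟩)
      · exact Or.inl rfl
      · exact Or.inr ⟨x, hx, rfl⟩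
    · rintro (rfl | ⟨x, hx, rfl⟩)
      · exact Or.inl rfl
      · exact Or.inr ⟨x, hx, rfl⟩
  set π : X → Finset X := fun x => if x ∈ C then C else {x} with hπdef
  have hπC : ∀ x ∈ C, π x = C := fun x hx => if_pos hx
  have hπN : ∀ x, x ∉ C → π x = {x} := fun x hx => if_neg hx
  have hπP : ∀ x, π x ∈ P ∧ x ∈ π x := by
    intro x
    by_cases hx : x ∈ C
    · rw [hπC x hx]
      exact ⟨(hmemP C).mpr (Or.inl rfl), hx⟩
    · rw [hπN x hx]
      exact ⟨(hmemP _).mpr (Or.inr ⟨x, hx, rfl⟩), Finset.mem_singleton_self x⟩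
  have hblockP : ∀ B ∈ P, ∀ x ∈ B, π x = B := by
    intro B hB x hxB
    rcases (hmemP B).mp hB with rfl | ⟨y, hy, rfl⟩
    · exact hπC x hxB
    · rw [Finset.mem_singleton] at hxB
      subst hxB
      exact hπN x hy
  have hPart : IsPartition P := by
    constructor
    · intro B hB
      rcases (hmemP B).mp hB with rfl | ⟨y, _, rfl⟩
      · exact hCne
      · exact Finset.singleton_nonempty y
    · intro x
      exact ⟨π x, ⟨(hπP x).1, (hπP x).2⟩, fun B hB => (hblockP B hB.1 x hB.2).symm⟩
  -- cardinality of P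
  have hcardP : P.card = 1 + (Fintype.card X - C.card) := by
    have hinj : Set.InjOn (fun x => ({x} : Finset X)) ↑(Finset.univ \ C) := fun a _ b _ h =>
      Finset.singleton_injective h
    have hCnotimg : C ∉ (Finset.univ \ C).image fun x => ({x} : Finset X) := by
      intro h
      obtain ⟨x, _, hx⟩ := Finset.mem_image.mp h
      exact hCsing x hx.symm
    rw [hPdef, Finset.card_insert_of_notMem hCnotimg, Finset.card_image_of_injOn hinj,
      Finset.card_sdiff_of_subset (Finset.subset_univ C), Finset.card_univ]
    omega
  have hcardX : C.card < Fintype.card X := hC2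
  have hNonDeg : NonDegPart P := by
    constructor <;> (rw [hcardP]; omega)
  -- external part of a menu of blocks
  set EJ : Finset (Finset X) → Finset X :=
    fun J => (Finset.univ \ C).filter fun x => ({x} : Finset X) ∈ J with hEJdef
  have hEJsub : ∀ J, EJ J ⊆ Cᶜ := by
    intro J x hx
    rw [Finset.mem_compl]
    exact (Finset.mem_sdiff.mp (Finset.mem_filter.mp hx).1).2
  have hmemEJ : ∀ J (x : X), x ∈ EJ J ↔ x ∉ C ∧ ({x} : Finset X) ∈ J := by
    intro J x
    simp [hEJdef, Finset.mem_filter, Finset.mem_sdiff]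
  -- the weights over blocks
  set ω : Finset X → Finset (Finset X) → ℝ := fun B J =>
    if B ∈ J then
      (if B = C then 1 - ∑ x ∈ EJ J, p x (C ∪ EJ J)
       else if C ∈ J then ∑ y ∈ B ∩ EJ J, p y (C ∪ EJ J)
       else ∑ y ∈ B ∩ EJ J, p y (EJ J)) else 0 with hωdef
  have hωC : ∀ J, C ∈ J → ω C J = 1 - ∑ x ∈ EJ J, p x (C ∪ EJ J) := by
    intro J hJ
    simp [hωdef, hJ]
  have hωs : ∀ J (x : X), x ∈ EJ J → C ∈ J →
      ω {x} J = p x (C ∪ EJ J) := by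
    intro J x hx hCJ
    have hxJ : ({x} : Finset X) ∈ J := ((hmemEJ J x).mp hx).2
    rw [hωdef]
    simp only [if_pos hxJ, if_neg (Ne.symm (hCsing x) : ({x} : Finset X) ≠ C), if_pos hCJ,
      Finset.singleton_inter_of_mem hx, Finset.sum_singleton]
  have hωs' : ∀ J (x : X), x ∈ EJ J → C ∉ J →
      ω {x} J = p x (EJ J) := by
    intro J x hx hCJ
    have hxJ : ({x} : Finset X) ∈ J := ((hmemEJ J x).mp hx).2
    rw [hωdef]
    simp only [if_pos hxJ, if_neg (Ne.symm (hCsing x) : ({x} : Finset X) ≠ C), if_neg hCJ,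
      Finset.singleton_inter_of_mem hx, Finset.sum_singleton]
  -- structure of a menu of blocks J ⊆ P
  have hJstruct : ∀ J ⊆ P, (C ∈ J → J = insert C ((EJ J).image fun x => ({x} : Finset X)))
      ∧ (C ∉ J → J = (EJ J).image fun x => ({x} : Finset X)) := by
    intro J hJP
    have h1 : ∀ B ∈ J, B ≠ C → ∃ x ∈ EJ J, B = {x} := by
      intro B hBJ hBC
      rcases (hmemP B).mp (hJP hBJ) with rfl | ⟨x, hx, rfl⟩
      · exact absurd rfl hBC
      · exact ⟨x, (hmemEJ J x).mpr ⟨hx, hBJ⟩, rfl⟩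
    have h2 : ∀ x ∈ EJ J, ({x} : Finset X) ∈ J := fun x hx => ((hmemEJ J x).mp hx).2
    constructor
    · intro hCJ
      ext B
      simp only [Finset.mem_insert, Finset.mem_image]
      constructor
      · intro hBJ
        by_cases hBC : B = C
        · exact Or.inl hBC
        · obtain ⟨x, hx, rfl⟩ := h1 B hBJ hBC
          exact Or.inr ⟨x, hx, rfl⟩
      · rintro (rfl | ⟨x, hx, rfl⟩)
        · exact hCJ
        · exact h2 x hx
    · intro hCJ
      ext B
      simp only [Finset.mem_image]
      constructor
      · intro hBJ
        have hBC : B ≠ C := fun h => hCJ (h ▸ hBJ)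
        obtain ⟨x, hx, rfl⟩ := h1 B hBJ hBC
        exact ⟨x, hx, rfl⟩
      · rintro ⟨x, hx, rfl⟩
        exact h2 x hx
  have hsumsing : ∀ (E : Finset X) (f : Finset X → ℝ),
      (∑ B ∈ E.image (fun x => ({x} : Finset X)), f B) = ∑ x ∈ E, f {x} :=
    fun E f => Finset.sum_image (fun a _ b _ h => Finset.singleton_injective h)
  -- ω is a positive stochastic choice on P
  have hωP : PosSCOn P ω := by
    constructor
    · intro B J hBJ
      rw [hωdef]
      simp [hBJ]
    · intro J hJne hJP
      by_cases hCJ : C ∈ J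
      · have hJeq := (hJstruct J hJP).1 hCJ
        have hCnotimg : C ∉ (EJ J).image fun x => ({x} : Finset X) := by
          intro h
          obtain ⟨x, _, hx⟩ := Finset.mem_image.mp h
          exact hCsing x hx.symm
        have hCEne : (C ∪ EJ J).Nonempty := hCne.mono Finset.subset_union_left
        have hsum : ∑ B ∈ J, ω B J = 1 := by
          rw [Finset.sum_congr hJeq (fun _ _ => rfl), Finset.sum_insert hCnotimg, hsumsing,
            hωC J hCJ, Finset.sum_congr rfl (fun x hx => hωs J x hx hCJ)]
          ring
        refine ⟨hsum, ?_⟩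
        intro B hBJ
        by_cases hBC : B = C
        · rw [hBC, hωC J hCJ]
          have hdisj : Disjoint C (EJ J) := hdisjCE _ (hEJsub J)
          have h := hsum1 (C ∪ EJ J) hCEne
          rw [Finset.sum_union hdisj] at h
          have hposC : 0 < ∑ y ∈ C, p y (C ∪ EJ J) :=
            Finset.sum_pos (fun y hy => hpos _ hCEne y (Finset.mem_union_left _ hy)) hCne
          linarith
        · rw [hJeq] at hBJ
          rcases Finset.mem_insert.mp hBJ with rfl | hB
          · exact absurd rfl hBC
          obtain ⟨x, hx, rfl⟩ := Finset.mem_image.mp hB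
          rw [hωs J x hx hCJ]
          exact hpos _ hCEne x (Finset.mem_union_right _ hx)
      · have hJeq := (hJstruct J hJP).2 hCJ
        have hEne : (EJ J).Nonempty := by
          obtain ⟨B, hB⟩ := hJne
          rw [hJeq] at hB
          obtain ⟨x, hx, _⟩ := Finset.mem_image.mp hB
          exact ⟨x, hx⟩
        have hsum : ∑ B ∈ J, ω B J = 1 := by
          rw [Finset.sum_congr hJeq (fun _ _ => rfl), hsumsing,
            Finset.sum_congr rfl (fun x hx => hωs' J x hx hCJ)]
          exact hsum1 _ hEne
        refine ⟨hsum, ?_⟩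
        intro B hBJ
        rw [hJeq] at hBJ
        obtain ⟨x, hx, rfl⟩ := Finset.mem_image.mp hBJ
        rw [hωs' J x hx hCJ]
        exact hpos _ hEne x hx
  -- data about the image of a menu A
  have hEA : ∀ A : Finset X, EJ (A.image π) = A \ C := by
    intro A
    ext x
    rw [hmemEJ, Finset.mem_sdiff]
    constructor
    · rintro ⟨hxC, hxJ⟩
      obtain ⟨y, hyA, hyx⟩ := Finset.mem_image.mp hxJ
      by_cases hyC : y ∈ C
      · rw [hπC y hyC] at hyx
        exact absurd hyx (hCsing x)
      · rw [hπN y hyC] at hyx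
        rw [Finset.singleton_injective hyx] at hyA hyC
        exact ⟨hyA, hxC⟩
    · rintro ⟨hxA, hxC⟩
      exact ⟨hxC, Finset.mem_image.mpr ⟨x, hxA, hπN x hxC⟩⟩
  have hCA : ∀ A : Finset X, C ∈ A.image π ↔ (A ∩ C).Nonempty := by
    intro A
    constructor
    · intro h
      obtain ⟨y, hyA, hyC⟩ := Finset.mem_image.mp h
      by_cases hy : y ∈ C
      · exact ⟨y, Finset.mem_inter.mpr ⟨hyA, hy⟩⟩
      · rw [hπN y hy] at hyC
        exact absurd hyC (hCsing y ·.symm)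
    · rintro ⟨y, hy⟩
      rw [Finset.mem_inter] at hy
      exact Finset.mem_image.mpr ⟨y, hy.1, hπC y hy.2⟩
  -- conclusion
  refine ⟨P, ⟨hPart, π, ω, fun _ => p, hπP, hωP, ?_, ?_⟩, hNonDeg⟩
  · intro B _
    exact ⟨hp.1, fun A hA hAB => hp.2 A hA (Finset.subset_univ A)⟩
  · intro A hA a haA
    have hAsp : A ∩ C ∪ A \ C = A := by
      ext z
      simp only [Finset.mem_union, Finset.mem_inter, Finset.mem_sdiff]
      tauto
    have hEsub : A \ C ⊆ Cᶜ := fun z hz =>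
      Finset.mem_compl.mpr (Finset.mem_sdiff.mp hz).2
    by_cases haC : a ∈ C
    · -- a in the category
      have hπa : π a = C := hπC a haC
      have hSne : (A ∩ C).Nonempty := ⟨a, Finset.mem_inter.mpr ⟨haA, haC⟩⟩
      have hCJ : C ∈ A.image π := (hCA A).mpr hSne
      have hfa : A.filter (fun x => x ∈ π a) = A ∩ C := by
        rw [hπa]
        ext z
        simp [Finset.mem_filter, Finset.mem_inter]
      show p a A = ω (π a) (A.image π) * p a (A.filter fun x => x ∈ π a)
      rw [hfa, hπa, hωC _ hCJ, hEA A]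
      have := keyC (A ∩ C) Finset.inter_subset_right (A \ C) hEsub a
        (Finset.mem_inter.mpr ⟨haA, haC⟩)
      rw [hAsp] at this
      exact this
    · -- a outside the category
      have hπa : π a = {a} := hπN a haC
      have hfa : A.filter (fun x => x ∈ π a) = {a} := by
        rw [hπa]
        ext z
        simp only [Finset.mem_filter, Finset.mem_singleton]
        constructor
        · rintro ⟨_, rfl⟩; rfl
        · rintro rfl; exact ⟨haA, rfl⟩
      have hp1 : p a ({a} : Finset X) = 1 := by
        have := hsum1 {a} (Finset.singleton_nonempty a)
        rwa [Finset.sum_singleton] at this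
      have haE : a ∈ EJ (A.image π) := by
        rw [hEA]
        exact Finset.mem_sdiff.mpr ⟨haA, haC⟩
      show p a A = ω (π a) (A.image π) * p a (A.filter fun x => x ∈ π a)
      rw [hfa, hπa, hp1, mul_one]
      by_cases hCJ : C ∈ A.image π
      · rw [hωs _ a haE hCJ, hEA A]
        have hSne := (hCA A).mp hCJ
        have h := hneu (A \ C) hEsub a (Finset.mem_sdiff.mpr ⟨haA, haC⟩)
          (A ∩ C) Finset.inter_subset_right hSne
        rw [hAsp] at h
        exact h
      · rw [hωs' _ a haE hCJ, hEA A]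
        have hSemp : A ∩ C = ∅ := by
          rw [← Finset.not_nonempty_iff_eq_empty]
          exact fun h => hCJ ((hCA A).mpr h)
        have : A \ C = A := by
          ext z
          simp only [Finset.mem_sdiff]
          constructor
          · exact fun h => h.1
          · intro hz
            refine ⟨hz, fun hzC => ?_⟩
            have : z ∈ A ∩ C := Finset.mem_inter.mpr ⟨hz, hzC⟩
            rw [hSemp] at this
            exact absurd this (Finset.notMem_empty z)
        rw [this]

/-- `p` is a non-degenerate SCC iff there exists a non-trivial category. -/
theorem stmt6 {X : Type*} [Fintype X] [DecidableEq X]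
    (p : X → Finset X → ℝ) (hcard : 3 ≤ Fintype.card X)
    (hp : PosSCOn Finset.univ p) :
    (∃ P : Finset (Finset X), IsSCCPart p P ∧ NonDegPart P) ↔
      ∃ C : Finset X, NonTrivialSet C ∧ IsCategory p C := by
  constructor
  · rintro ⟨P, hSCC, hnd⟩
    exact fwd_dir p hp P hSCC hnd
  · rintro ⟨C, hC, hcat⟩
    exact bwd_dir p hp C hC hcat
end

section
/- If p is SCC w.r.t. partition {X_i}, then every class X_i with |X_i| ≥ 2 is a category: it satisfies both C-IND and C-NEU. -/
open Finset
open scoped Classical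

/-- in an SCC, every class with at least two items is a category. -/
theorem stmt7 {X I : Type*} [Fintype X] [DecidableEq X] [Fintype I] [DecidableEq I]
    (p : X → Finset X → ℝ) (π : X → I) (ω : I → Finset I → ℝ)
    (σ : I → X → Finset X → ℝ)
    (h : IsSCC p π ω σ) :
    ∀ i : I, 2 ≤ (classOf π i).card → IsCategory p (classOf π i) := by
  intro i hcard
  obtain ⟨-, hω, hσ, hp⟩ := h
  have hmemC : ∀ x : X, x ∈ classOf π i ↔ π x = i := by
    intro x; simp [classOf]
  constructor
  · -- C-IND
    intro S hS a ha b hb E hE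
    have hπS : ∀ x ∈ S, π x = i := fun x hx => (hmemC x).1 (hS hx)
    have hπE : ∀ x ∈ E, π x ≠ i := by
      intro x hx
      have := hE hx
      rw [Finset.mem_compl, hmemC] at this
      exact this
    have hπa : π a = i := hπS a ha
    have hπb : π b = i := hπS b hb
    have hfS : S.filter (fun x => π x = i) = S :=
      Finset.filter_eq_self.2 hπS
    have hfE : E.filter (fun x => π x = i) = ∅ :=
      Finset.filter_eq_empty_iff.2 hπE
    have hfSE : (S ∪ E).filter (fun x => π x = i) = S := by
      rw [Finset.filter_union, hfS, hfE, Finset.union_empty]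
    have hpaS := hp S ⟨a, ha⟩ a ha
    have hpbS := hp S ⟨a, ha⟩ b hb
    have hpaSE := hp (S ∪ E) ⟨a, Finset.mem_union_left _ ha⟩ a (Finset.mem_union_left _ ha)
    have hpbSE := hp (S ∪ E) ⟨a, Finset.mem_union_left _ ha⟩ b (Finset.mem_union_left _ hb)
    rw [hπa] at hpaS hpaSE
    rw [hπb] at hpbS hpbSE
    rw [hfS] at hpaS hpbS
    rw [hfSE] at hpaSE hpbSE
    have hiS : i ∈ S.image π := Finset.mem_image.2 ⟨a, ha, hπa⟩
    have hiSE : i ∈ (S ∪ E).image π :=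
      Finset.mem_image.2 ⟨a, Finset.mem_union_left _ ha, hπa⟩
    have hω1 : 0 < ω i (S.image π) :=
      ((hω.2 (S.image π) ⟨i, hiS⟩ (Finset.subset_univ _)).2 i hiS)
    have hω2 : 0 < ω i ((S ∪ E).image π) :=
      ((hω.2 ((S ∪ E).image π) ⟨i, hiSE⟩ (Finset.subset_univ _)).2 i hiSE)
    rw [hpaS, hpbS, hpaSE, hpbSE,
      mul_div_mul_left _ _ (ne_of_gt hω1), mul_div_mul_left _ _ (ne_of_gt hω2)]
  · -- C-NEU
    intro E hE x hx S hS hSne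
    have hπS : ∀ z ∈ S, π z = i := fun z hz => (hmemC z).1 (hS hz)
    have hπC : ∀ z ∈ classOf π i, π z = i := fun z hz => (hmemC z).1 hz
    have hπx : π x ≠ i := by
      have := hE hx
      rw [Finset.mem_compl, hmemC] at this
      exact this
    have hCne : (classOf π i).Nonempty := Finset.card_pos.1 (by omega)
    have himS : S.image π = {i} := by
      ext y
      simp only [Finset.mem_image, Finset.mem_singleton]
      constructor
      · rintro ⟨z, hz, rfl⟩; exact hπS z hz
      · rintro rfl; exact ⟨hSne.choose, hSne.choose_spec, hπS _ hSne.choose_spec⟩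
    have himC : (classOf π i).image π = {i} := by
      ext y
      simp only [Finset.mem_image, Finset.mem_singleton]
      constructor
      · rintro ⟨z, hz, rfl⟩; exact hπC z hz
      · rintro rfl; exact ⟨hCne.choose, hCne.choose_spec, hπC _ hCne.choose_spec⟩
    have him : (S ∪ E).image π = ((classOf π i) ∪ E).image π := by
      rw [Finset.image_union, Finset.image_union, himS, himC]
    have hfS : S.filter (fun z => π z = π x) = ∅ :=
      Finset.filter_eq_empty_iff.2 (fun z hz h' => hπx (h' ▸ hπS z hz))
    have hfC : (classOf π i).filter (fun z => π z = π x) = ∅ :=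
      Finset.filter_eq_empty_iff.2 (fun z hz h' => hπx (h' ▸ hπC z hz))
    have hfilt : (S ∪ E).filter (fun z => π z = π x)
        = ((classOf π i) ∪ E).filter (fun z => π z = π x) := by
      rw [Finset.filter_union, Finset.filter_union, hfS, hfC]
    rw [hp (S ∪ E) ⟨x, Finset.mem_union_right _ hx⟩ x (Finset.mem_union_right _ hx),
      hp ((classOf π i) ∪ E) ⟨x, Finset.mem_union_right _ hx⟩ x (Finset.mem_union_right _ hx),
      him, hfilt]
end

section
/- A positive stochastic choice p on X is a non-degenerate stochastic choice with weak categorization (SCWC) if and only if there exists a non-trivial weak category G in X. -/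
open Finset
open scoped Classical

/-- `p` is a non-degenerate SCWC iff there exists a non-trivial weak
category. -/
theorem stmt8 {X : Type*} [Fintype X] [DecidableEq X]
    (p : X → Finset X → ℝ) (hcard : 3 ≤ Fintype.card X)
    (hp : PosSCOn Finset.univ p) :
    (∃ P : Finset (Finset X), IsSCWCPart p P ∧ NonDegPart P) ↔
      ∃ G : Finset X, NonTrivialSet G ∧ CInd p G := by
  have hppos : ∀ A : Finset X, A.Nonempty → ∀ y ∈ A, 0 < p y A :=
    fun A hA => (hp.2 A hA (Finset.subset_univ A)).2
  have hpsum : ∀ A : Finset X, A.Nonempty → (∑ y ∈ A, p y A) = 1 :=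
    fun A hA => (hp.2 A hA (Finset.subset_univ A)).1
  constructor
  · rintro ⟨P, ⟨hPart, π, ω, σ, hπ, hω, hσ, hmain⟩, hdeg⟩
    have hbig : ∃ B ∈ P, 2 ≤ B.card := by
      by_contra h
      push_neg at h
      have hle : Fintype.card X ≤ P.card := by
        calc Fintype.card X = (Finset.univ : Finset X).card := (Finset.card_univ).symm
          _ ≤ (P.biUnion id).card := Finset.card_le_card (fun x _ => by
                obtain ⟨B, ⟨hBP, hxB⟩, _⟩ := hPart.2 x
                exact Finset.mem_biUnion.2 ⟨B, hBP, hxB⟩)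
          _ ≤ ∑ B ∈ P, B.card := Finset.card_biUnion_le
          _ ≤ ∑ _B ∈ P, 1 := Finset.sum_le_sum fun B hB => Nat.lt_succ_iff.mp (h B hB)
          _ = P.card := by simp
      have := hdeg.2
      omega
    obtain ⟨B, hBP, hB2⟩ := hbig
    have hunique : ∀ x : X, ∀ C ∈ P, x ∈ C → C = π x := by
      intro x C hCP hxC
      exact (hPart.2 x).unique ⟨hCP, hxC⟩ ⟨(hπ x).1, (hπ x).2⟩
    refine ⟨B, ⟨hB2, ?_⟩, ?_⟩
    · obtain ⟨C, hCP, hCB⟩ := Finset.exists_mem_ne hdeg.1 B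
      have hdisj : Disjoint B C := by
        rw [Finset.disjoint_left]
        intro x hxB hxC
        exact hCB ((hunique x C hCP hxC).trans (hunique x B hBP hxB).symm)
      obtain ⟨c, hc⟩ := hPart.1 C hCP
      have h1 : 1 ≤ C.card := Finset.card_pos.2 ⟨c, hc⟩
      have h2 : B.card + C.card ≤ Fintype.card X := by
        rw [← Finset.card_union_of_disjoint hdisj, ← Finset.card_univ]
        exact Finset.card_le_card (Finset.subset_univ _)
      omega
    · intro S hS a ha b hb E hE
      have hπa : π a = B := (hunique a B hBP (hS ha)).symm
      have hπb : π b = B := (hunique b B hBP (hS hb)).symm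
      have hSne : S.Nonempty := ⟨a, ha⟩
      have hSEne : (S ∪ E).Nonempty := ⟨a, Finset.mem_union_left _ ha⟩
      have hfS : (S.filter fun x => x ∈ B) = S :=
        Finset.filter_true_of_mem (fun x hx => hS hx)
      have hfSE : ((S ∪ E).filter fun x => x ∈ B) = S := by
        ext x
        simp only [Finset.mem_filter, Finset.mem_union]
        constructor
        · rintro ⟨hx | hx, hxB⟩
          · exact hx
          · exact absurd hxB (Finset.mem_compl.mp (hE hx))
        · intro hx; exact ⟨Or.inl hx, hS hx⟩
      have hpaS := hmain S hSne a ha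
      have hpbS := hmain S hSne b hb
      have hpaSE := hmain (S ∪ E) hSEne a (Finset.mem_union_left _ ha)
      have hpbSE := hmain (S ∪ E) hSEne b (Finset.mem_union_left _ hb)
      rw [hπa] at hpaS hpaSE
      rw [hπb] at hpbS hpbSE
      rw [hfS] at hpaS hpbS
      rw [hfSE] at hpaSE hpbSE
      have hωS : ω S B ≠ 0 := by
        intro h0
        exact (((hω S hSne).1 B).2.mp h0)
          (Finset.mem_image.2 ⟨a, ha, hπa⟩)
      have hωSE : ω (S ∪ E) B ≠ 0 := by
        intro h0
        exact (((hω (S ∪ E) hSEne).1 B).2.mp h0)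
          (Finset.mem_image.2 ⟨a, Finset.mem_union_left _ ha, hπa⟩)
      rw [hpaS, hpbS, hpaSE, hpbSE, mul_div_mul_left _ _ hωS, mul_div_mul_left _ _ hωSE]
  · rintro ⟨G, ⟨hG1, hG2⟩, hCI⟩
    have hGne : G.Nonempty := Finset.card_pos.1 (by omega)
    have hGsing : ∀ x : X, G ≠ ({x} : Finset X) := by
      intro x h
      rw [h] at hG1
      simp at hG1
    set π : X → Finset X := fun x => if x ∈ G then G else {x} with hπdef
    have hπG : ∀ x : X, π x = G ↔ x ∈ G := by
      intro x
      by_cases hx : x ∈ G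
      · simp [hπdef, hx]
      · simp only [hπdef, if_neg hx]
        exact ⟨fun h => absurd h.symm (hGsing x), fun h => absurd h hx⟩
    have hπval : ∀ x : X, x ∉ G → π x = ({x} : Finset X) := by
      intro x hx; simp [hπdef, hx]
    have hmem : ∀ x c : X, x ∈ π c ↔ π x = π c := by
      intro x c
      by_cases hc : c ∈ G
      · rw [(hπG c).2 hc]
        exact (hπG x).symm
      · rw [hπval c hc, Finset.mem_singleton]
        constructor
        · rintro rfl
          exact hπval _ hc
        · intro h
          by_cases hx : x ∈ G
          · exfalso; rw [(hπG x).2 hx] at h; exact hGsing c h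
          · rw [hπval x hx, Finset.singleton_inj] at h
            exact h
    have hself : ∀ x : X, x ∈ π x := fun x => (hmem x x).2 rfl
    have hfiber : ∀ (A : Finset X) (c : X),
        (A.filter fun x => π x = π c) = A ∩ π c := by
      intro A c
      ext x
      simp only [Finset.mem_filter, Finset.mem_inter, hmem x c]
    set P : Finset (Finset X) := insert G ((Gᶜ : Finset X).image fun x => ({x} : Finset X))
      with hPdef
    have hπP : ∀ x : X, π x ∈ P := by
      intro x
      by_cases hx : x ∈ G
      · rw [(hπG x).2 hx]; exact Finset.mem_insert_self _ _
      · rw [hπval x hx]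
        exact Finset.mem_insert_of_mem
          (Finset.mem_image.2 ⟨x, Finset.mem_compl.2 hx, rfl⟩)
    have hPblock : ∀ C ∈ P, ∀ x ∈ C, C = π x := by
      intro C hCP x hxC
      rcases Finset.mem_insert.1 hCP with rfl | hC
      · exact ((hπG x).2 hxC).symm
      · obtain ⟨y, hy, rfl⟩ := Finset.mem_image.1 hC
        rw [Finset.mem_singleton] at hxC
        subst hxC
        exact (hπval x (Finset.mem_compl.1 hy)).symm
    set ω : Finset X → Finset X → ℝ :=
      fun A C => if C ∈ A.image π then ∑ y ∈ A ∩ C, p y A else 0 with hωdef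
    have hωpos : ∀ (A : Finset X), A.Nonempty → ∀ C ∈ A.image π, 0 < ω A C := by
      intro A hA C hC
      obtain ⟨c, hcA, rfl⟩ := Finset.mem_image.1 hC
      rw [hωdef]
      simp only [if_pos hC]
      apply Finset.sum_pos
      · intro y hy
        exact hppos A hA y (Finset.mem_inter.1 hy).1
      · exact ⟨c, Finset.mem_inter.2 ⟨hcA, hself c⟩⟩
    have hmainG : ∀ (A : Finset X), A.Nonempty → ∀ a ∈ A,
        p a A = ω A (π a) * p a (A.filter fun x => x ∈ π a) := by
      intro A hA a haA
      have hfa : (A.filter fun x => x ∈ π a) = A ∩ π a := by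
        rw [← hfiber A a]
        apply Finset.filter_congr
        intro x _
        simp [hmem x a]
      rw [hfa, hωdef]
      have hmemim : π a ∈ A.image π := Finset.mem_image_of_mem π haA
      simp only [if_pos hmemim]
      by_cases ha : a ∈ G
      · have hπa : π a = G := (hπG a).2 ha
        rw [hπa]
        have haAG : a ∈ A ∩ G := Finset.mem_inter.2 ⟨haA, ha⟩
        have hAGne : (A ∩ G).Nonempty := ⟨a, haAG⟩
        have hunion : (A ∩ G) ∪ (A \ G) = A := by
          ext x
          simp only [Finset.mem_union, Finset.mem_inter, Finset.mem_sdiff]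
          tauto
        have hkey : ∀ b ∈ A ∩ G,
            p a (A ∩ G) * p b A = p a A * p b (A ∩ G) := by
          intro b hbAG
          have hb : b ∈ G := (Finset.mem_inter.1 hbAG).2
          have hbA : b ∈ A := (Finset.mem_inter.1 hbAG).1
          have hsd : A \ G ⊆ Gᶜ := by
            intro x hx
            exact Finset.mem_compl.2 (Finset.mem_sdiff.1 hx).2
          have hratio := hCI (A ∩ G) (Finset.inter_subset_right) a haAG b hbAG
            (A \ G) hsd
          rw [hunion] at hratio
          have h1 : p b (A ∩ G) ≠ 0 := ne_of_gt (hppos _ hAGne b hbAG)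
          have h2 : p b A ≠ 0 := ne_of_gt (hppos A hA b hbA)
          exact (div_eq_div_iff h1 h2).1 hratio
        have hsum : p a (A ∩ G) * (∑ b ∈ A ∩ G, p b A)
            = p a A * (∑ b ∈ A ∩ G, p b (A ∩ G)) := by
          rw [Finset.mul_sum, Finset.mul_sum]
          exact Finset.sum_congr rfl hkey
        rw [hpsum (A ∩ G) hAGne, mul_one] at hsum
        rw [← hsum, mul_comm]
      · have hπa : π a = ({a} : Finset X) := hπval a ha
        rw [hπa]
        have h1 : A ∩ {a} = {a} := by
          ext x
          simp only [Finset.mem_inter, Finset.mem_singleton]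
          constructor
          · exact fun h => h.2
          · rintro rfl; exact ⟨haA, rfl⟩
        rw [h1, Finset.sum_singleton]
        have h2 : p a {a} = 1 := by
          have := hpsum {a} ⟨a, Finset.mem_singleton_self a⟩
          rwa [Finset.sum_singleton] at this
        rw [h2, mul_one]
    refine ⟨P, ⟨⟨?_, ?_⟩, π, ω, fun _ => p, ?_, ?_, ?_, hmainG⟩, ?_⟩
    · -- blocks nonempty
      intro C hCP
      rcases Finset.mem_insert.1 hCP with rfl | hC
      · exact hGne
      · obtain ⟨y, _, rfl⟩ := Finset.mem_image.1 hC
        exact ⟨y, Finset.mem_singleton_self y⟩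
    · -- ∃!
      intro x
      refine ⟨π x, ⟨hπP x, hself x⟩, ?_⟩
      rintro C ⟨hCP, hxC⟩
      exact hPblock C hCP x hxC
    · exact fun x => ⟨hπP x, hself x⟩
    · -- ω conditions
      intro A hA
      constructor
      · intro C
        constructor
        · by_cases hC : C ∈ A.image π
          · exact le_of_lt (hωpos A hA C hC)
          · rw [hωdef]; simp [hC]
        · constructor
          · intro h0 hC
            exact absurd h0 (ne_of_gt (hωpos A hA C hC))
          · intro hC
            rw [hωdef]; simp [hC]
      · -- sum
        have : ∑ C ∈ A.image π, ω A C = ∑ y ∈ A, p y A := by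
          apply Finset.sum_image'
          intro c hc
          rw [hfiber A c, hωdef]
          simp only [if_pos (Finset.mem_image_of_mem π hc)]
        rw [this, hpsum A hA]
    · -- σ conditions
      intro C _
      exact ⟨hp.1, fun A hA _ => ⟨hpsum A hA, hppos A hA⟩⟩
    · -- NonDegPart
      have hGnotim : G ∉ (Gᶜ : Finset X).image fun x => ({x} : Finset X) := by
        intro h
        obtain ⟨y, _, hy⟩ := Finset.mem_image.1 h
        exact hGsing y hy.symm
      have hinj : Set.InjOn (fun x : X => ({x} : Finset X)) (Gᶜ : Finset X) := by
        intro x _ y _ h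
        simpa [Finset.singleton_inj] using h
      have hcardP : P.card = 1 + (Fintype.card X - G.card) := by
        rw [hPdef, Finset.card_insert_of_notMem hGnotim,
          Finset.card_image_of_injOn hinj, Finset.card_compl]
        omega
      constructor
      · omega
      · omega
end

section
/- No non-degenerate SCC is a Luce model: if p is SCC w.r.t. a partition {X_i} with 1 < |I| < |X|, then there exists no function u : X → ℝ_{>0} with p(a,A) = u(a)/Σ_{x∈A} u(x) for all menus A and a ∈ A. -/
open Finset
open scoped Classical

/-- no non-degenerate SCC is a Luce model. -/
theorem stmt9 {X I : Type*} [Fintype X] [DecidableEq X] [Fintype I] [DecidableEq I]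
    (p : X → Finset X → ℝ) (π : X → I) (ω : I → Finset I → ℝ)
    (σ : I → X → Finset X → ℝ)
    (h : IsSCC p π ω σ)
    (hnd : 1 < Fintype.card I ∧ Fintype.card I < Fintype.card X) :
    ¬ ∃ u : X → ℝ, (∀ x, 0 < u x) ∧
      ∀ A : Finset X, A.Nonempty → ∀ a ∈ A, p a A = u a / ∑ x ∈ A, u x := by
  rintro ⟨u, hu, hL⟩
  obtain ⟨hsurj, -, -, hp⟩ := h
  obtain ⟨a, b, hab, hπab⟩ := Fintype.exists_ne_map_eq_of_card_lt π hnd.2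
  obtain ⟨j, hj⟩ := Fintype.exists_ne_of_one_lt_card hnd.1 (π a)
  obtain ⟨c, rfl⟩ := hsurj j
  have hca : c ≠ a := fun h => hj (by rw [h])
  have hcb : c ≠ b := fun h => hj (by rw [h, ← hπab])
  have hA1 : ({a, c} : Finset X).Nonempty := ⟨a, by simp⟩
  have hA2 : ({a, b, c} : Finset X).Nonempty := ⟨a, by simp⟩
  have hc1 : c ∈ ({a, c} : Finset X) := by simp
  have hc2 : c ∈ ({a, b, c} : Finset X) := by simp
  have himg : ({a, b, c} : Finset X).image π = ({a, c} : Finset X).image π := by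
    simp [Finset.image_insert, hπab]
  have hf1 : ({a, c} : Finset X).filter (fun x => π x = π c) = {c} := by
    ext x
    simp only [Finset.mem_filter, Finset.mem_insert, Finset.mem_singleton]
    constructor
    · rintro ⟨(rfl | rfl), h2⟩
      · exact absurd h2.symm hj
      · rfl
    · rintro rfl; exact ⟨Or.inr rfl, rfl⟩
  have hf2 : ({a, b, c} : Finset X).filter (fun x => π x = π c) = {c} := by
    ext x
    simp only [Finset.mem_filter, Finset.mem_insert, Finset.mem_singleton]
    constructor
    · rintro ⟨(rfl | rfl | rfl), h2⟩
      · exact absurd h2.symm hj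
      · exact absurd (h2.symm.trans hπab.symm) hj
      · rfl
    · rintro rfl; exact ⟨Or.inr (Or.inr rfl), rfl⟩
  have hkey : p c ({a, c} : Finset X) = p c ({a, b, c} : Finset X) := by
    rw [hp _ hA1 c hc1, hp _ hA2 c hc2, himg, hf1, hf2]
  rw [hL _ hA1 c hc1, hL _ hA2 c hc2] at hkey
  have hab' : a ≠ b := hab
  have hs1 : (∑ x ∈ ({a, c} : Finset X), u x) = u a + u c := by
    rw [Finset.sum_pair (Ne.symm hca)]
  have hs2 : (∑ x ∈ ({a, b, c} : Finset X), u x) = u a + (u b + u c) := by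
    rw [Finset.sum_insert (by simp [hab', Ne.symm hca]),
        Finset.sum_pair (Ne.symm hcb)]
  rw [hs1, hs2] at hkey
  have h1 : 0 < u a + u c := by linarith [hu a, hu c]
  have h2 : 0 < u a + (u b + u c) := by linarith [hu a, hu b, hu c]
  have := (div_eq_div_iff h1.ne' h2.ne').mp hkey
  nlinarith [hu a, hu b, hu c]
end

section
/- Every non-degenerate SCC is represented by a probability distribution on the set of deterministic resolvable choices: if (p,{X_i}) is non-degenerate SCC, there exists a probability distribution Q on the set R of deterministic choice functions resolvable w.r.t. {X_i} such that p(a,A) = Σ_{c ∈ R : c(A)=a} Q(c) for all menus A and a ∈ A. -/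
open Finset
open scoped Classical

set_option maxHeartbeats 1000000
set_option linter.unusedSectionVars false
section AuxMarginal
variable {α β γ : Type*} [Fintype α] [DecidableEq α] [Fintype β] [DecidableEq β]
  [Fintype γ] [DecidableEq γ]

lemma sum_prod_pi (f : α → β → ℝ) :
    ∑ g : α → β, ∏ a, f a (g a) = ∏ a, ∑ b, f a b := by
  rw [Finset.prod_univ_sum (fun _ => (Finset.univ : Finset β)) f, Fintype.piFinset_univ]

lemma marginalSet (f : α → β → ℝ) (h1 : ∀ a, ∑ b, f a b = 1) (a₀ : α) (T : Finset β) :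
    ∑ g : α → β, (if g a₀ ∈ T then ∏ a, f a (g a) else 0) = ∑ b ∈ T, f a₀ b := by
  have key : ∀ g : α → β, (if g a₀ ∈ T then ∏ a, f a (g a) else 0)
      = ∏ a, (fun a b => if a = a₀ ∧ b ∉ T then 0 else f a b) a (g a) := by
    intro g
    by_cases hg : g a₀ ∈ T
    · rw [if_pos hg]
      refine Finset.prod_congr rfl fun a _ => ?_
      by_cases ha : a = a₀
      · subst ha; simp [hg]
      · simp [ha]
    · rw [if_neg hg]
      symm
      apply Finset.prod_eq_zero (Finset.mem_univ a₀)
      simp [hg]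
  calc ∑ g : α → β, (if g a₀ ∈ T then ∏ a, f a (g a) else 0)
      = ∑ g : α → β, ∏ a, (fun a b => if a = a₀ ∧ b ∉ T then 0 else f a b) a (g a) :=
        Finset.sum_congr rfl fun g _ => key g
    _ = ∏ a, ∑ b, (if a = a₀ ∧ b ∉ T then 0 else f a b) := by exact sum_prod_pi fun a b => if a = a₀ ∧ b ∉ T then 0 else f a b
    _ = ∑ b ∈ T, f a₀ b := by
        rw [Finset.prod_eq_single a₀ (fun a _ ha => by simp [ha, h1 a])
          (fun h => absurd (Finset.mem_univ a₀) h)]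
        have h2 : ∀ b, (if a₀ = a₀ ∧ b ∉ T then 0 else f a₀ b)
            = if b ∈ T then f a₀ b else 0 := by
          intro b; by_cases hb : b ∈ T <;> simp [hb]
        rw [Finset.sum_congr rfl (fun b _ => h2 b), Finset.sum_ite_mem, Finset.univ_inter]

lemma marginalPt (f : α → β → ℝ) (h1 : ∀ a, ∑ b, f a b = 1) (a₀ : α) (b₀ : β) :
    ∑ g : α → β, (if g a₀ = b₀ then ∏ a, f a (g a) else 0) = f a₀ b₀ := by
  have h := marginalSet f h1 a₀ {b₀}
  simpa using h

lemma marginal2 (f : α → β → γ → ℝ) (h1 : ∀ a b, ∑ c, f a b c = 1)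
    (a₀ : α) (b₀ : β) (c₀ : γ) :
    ∑ g : α → β → γ, (if g a₀ b₀ = c₀ then ∏ a, ∏ b, f a b (g a b) else 0)
      = f a₀ b₀ c₀ := by
  have hF : ∀ a, ∑ h : β → γ, ∏ b, f a b (h b) = 1 := by
    intro a; rw [sum_prod_pi]; exact Finset.prod_eq_one fun b _ => h1 a b
  have h := marginalSet (fun a (h : β → γ) => ∏ b, f a b (h b)) hF a₀
      (Finset.univ.filter fun h : β → γ => h b₀ = c₀)
  have h3 : ∑ h ∈ Finset.univ.filter (fun h : β → γ => h b₀ = c₀), ∏ b, f a₀ b (h b)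
      = f a₀ b₀ c₀ := by
    rw [Finset.sum_filter]
    exact marginalPt (f a₀) (h1 a₀) b₀ c₀
  rw [h3] at h
  rw [← h]
  refine Finset.sum_congr rfl fun g _ => ?_
  simp only [Finset.mem_filter, Finset.mem_univ, true_and]

end AuxMarginal

/-- every non-degenerate SCC is represented by a probability distribution
on the set of deterministic choices resolvable w.r.t. the partition. -/
theorem stmt12 {X I : Type*} [Fintype X] [DecidableEq X] [Fintype I] [DecidableEq I]
    (p : X → Finset X → ℝ) (π : X → I) (ω : I → Finset I → ℝ)
    (σ : I → X → Finset X → ℝ)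
    (h : IsSCC p π ω σ)
    (hnd : 1 < Fintype.card I ∧ Fintype.card I < Fintype.card X) :
    ∃ Q : (Finset X → X) → ℝ,
      (∀ c, 0 ≤ Q c) ∧
      (∀ c, ¬ (IsChoiceFun c ∧ Resolvable π c) → Q c = 0) ∧
      (∑ c : Finset X → X, Q c) = 1 ∧
      ∀ A : Finset X, A.Nonempty → ∀ a ∈ A,
        p a A = ∑ c ∈ Finset.univ.filter (fun c : Finset X → X => c A = a), Q c := by

  classical
  obtain ⟨hsurj, hω, hσ, hrep⟩ := h
  have hIne : Nonempty I := Fintype.card_pos_iff.mp (by omega)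
  have hXne : Nonempty X := Fintype.card_pos_iff.mp (by omega)
  obtain ⟨i₀⟩ := hIne
  obtain ⟨x₀⟩ := hXne
  set wB : Finset I → I → ℝ :=
    fun B j => if B.Nonempty then ω j B else if j = i₀ then 1 else 0 with hwBdef
  set v : I → Finset X → X → ℝ := fun i S x =>
    if S.Nonempty ∧ S ⊆ classOf π i then σ i x S else if x = x₀ then 1 else 0 with hvdef
  have hω0 : ∀ j B, j ∉ B → ω j B = 0 := hω.1
  have hσ0 : ∀ i x S, x ∉ S → σ i x S = 0 := fun i => (hσ i).1
  have hwB1 : ∀ B, ∑ j, wB B j = 1 := by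
    intro B
    by_cases hB : B.Nonempty
    · simp only [hwBdef, if_pos hB]
      rw [← Finset.sum_subset (Finset.subset_univ B) (fun j _ hj => hω0 j B hj)]
      exact (hω.2 B hB (Finset.subset_univ B)).1
    · simp [hwBdef, hB]
  have hwB0 : ∀ B j, 0 ≤ wB B j := by
    intro B j
    by_cases hB : B.Nonempty
    · simp only [hwBdef, if_pos hB]
      by_cases hj : j ∈ B
      · exact le_of_lt ((hω.2 B hB (Finset.subset_univ B)).2 j hj)
      · rw [hω0 j B hj]
    · by_cases hj : j = i₀ <;> simp [hwBdef, hB, hj]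
  have hwBmem : ∀ B j, B.Nonempty → wB B j ≠ 0 → j ∈ B := by
    intro B j hB hne
    by_contra hj
    exact hne (by simp [hwBdef, hB, hω0 j B hj])
  have hwBval : ∀ B j, B.Nonempty → wB B j = ω j B := fun B j hB => by simp [hwBdef, hB]
  have hv1 : ∀ i S, ∑ x, v i S x = 1 := by
    intro i S
    by_cases hS : S.Nonempty ∧ S ⊆ classOf π i
    · simp only [hvdef, if_pos hS]
      rw [← Finset.sum_subset (Finset.subset_univ S) (fun x _ hx => hσ0 i x S hx)]
      exact ((hσ i).2 S hS.1 hS.2).1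
    · simp [hvdef, hS]
  have hv0 : ∀ i S x, 0 ≤ v i S x := by
    intro i S x
    by_cases hS : S.Nonempty ∧ S ⊆ classOf π i
    · simp only [hvdef, if_pos hS]
      by_cases hx : x ∈ S
      · exact le_of_lt (((hσ i).2 S hS.1 hS.2).2 x hx)
      · rw [hσ0 i x S hx]
    · by_cases hx : x = x₀ <;> simp [hvdef, hS, hx]
  have hvmem : ∀ i S x, S.Nonempty → S ⊆ classOf π i → v i S x ≠ 0 → x ∈ S := by
    intro i S x h1 h2 hne
    by_contra hx
    exact hne (by simp [hvdef, h1, h2, hσ0 i x S hx])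
  have hvval : ∀ i S x, S.Nonempty → S ⊆ classOf π i → v i S x = σ i x S :=
    fun i S x h1 h2 => by simp [hvdef, h1, h2]
  set F : I → (Finset X → X) → ℝ := fun i g => ∏ S, v i S (g S) with hFdef
  set W : (Finset I → I) → ℝ := fun cI => ∏ B, wB B (cI B) with hWdef
  set V : (I → Finset X → X) → ℝ := fun cf => ∏ i, F i (cf i) with hVdef
  have hW0 : ∀ cI, 0 ≤ W cI := fun cI => Finset.prod_nonneg fun B _ => hwB0 B (cI B)
  have hF0 : ∀ i g, 0 ≤ F i g := fun i g => Finset.prod_nonneg fun S _ => hv0 i S (g S)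
  have hV0 : ∀ cf, 0 ≤ V cf := fun cf => Finset.prod_nonneg fun i _ => hF0 i (cf i)
  have hWsum : ∑ cI : Finset I → I, W cI = 1 := by
    rw [hWdef, sum_prod_pi wB]
    exact Finset.prod_eq_one fun B _ => hwB1 B
  have hFsum : ∀ i, ∑ g : Finset X → X, F i g = 1 := by
    intro i
    rw [hFdef]
    rw [show (∑ g : Finset X → X, ∏ S, v i S (g S)) = ∏ S, ∑ x, v i S x from
      sum_prod_pi (v i)]
    exact Finset.prod_eq_one fun S _ => hv1 i S
  have hVsum : ∑ cf : I → Finset X → X, V cf = 1 := by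
    rw [hVdef, sum_prod_pi F]
    exact Finset.prod_eq_one fun i _ => hFsum i
  set ind : (Finset I → I) → (I → Finset X → X) → Finset X → X :=
    fun cI cf A => cf (cI (A.image π)) (A.filter fun x => π x = cI (A.image π)) with hinddef
  refine ⟨fun c => ∑ cI : Finset I → I, ∑ cf : I → Finset X → X,
      if ind cI cf = c then W cI * V cf else 0, ?_, ?_, ?_, ?_⟩
  · intro c
    refine Finset.sum_nonneg fun cI _ => Finset.sum_nonneg fun cf _ => ?_
    by_cases hc : ind cI cf = c
    · rw [if_pos hc]; exact mul_nonneg (hW0 cI) (hV0 cf)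
    · rw [if_neg hc]
  · intro c hc
    refine Finset.sum_eq_zero fun cI _ => Finset.sum_eq_zero fun cf _ => ?_
    by_cases hind : ind cI cf = c
    · rw [if_pos hind]
      by_contra hne
      have hWne : W cI ≠ 0 := fun h0 => hne (by rw [h0, zero_mul])
      have hVne : V cf ≠ 0 := fun h0 => hne (by rw [h0, mul_zero])
      have hcI : ∀ B : Finset I, B.Nonempty → cI B ∈ B := by
        intro B hB
        have hBne : wB B (cI B) ≠ 0 := by
          intro h0
          exact hWne (Finset.prod_eq_zero (Finset.mem_univ B) h0)
        exact hwBmem B (cI B) hB hBne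
      have hcf : ∀ i (S : Finset X), S.Nonempty → S ⊆ classOf π i → cf i S ∈ S := by
        intro i S h1 h2
        have hFne : F i (cf i) ≠ 0 := by
          intro h0
          exact hVne (Finset.prod_eq_zero (Finset.mem_univ i) h0)
        have hvne : v i S (cf i S) ≠ 0 := by
          intro h0
          exact hFne (Finset.prod_eq_zero (Finset.mem_univ S) h0)
        exact hvmem i S (cf i S) h1 h2 hvne
      apply hc
      have hchoice : IsChoiceFun c := by
        intro A hA
        rw [← hind]
        have himg : (A.image π).Nonempty := hA.image π
        have hj : cI (A.image π) ∈ A.image π := hcI _ himg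
        obtain ⟨x, hxA, hxj⟩ := Finset.mem_image.mp hj
        have hSne : (A.filter fun y => π y = cI (A.image π)).Nonempty :=
          ⟨x, Finset.mem_filter.mpr ⟨hxA, hxj⟩⟩
        have hSsub : (A.filter fun y => π y = cI (A.image π)) ⊆ classOf π (cI (A.image π)) := by
          intro y hy
          simp only [classOf, Finset.mem_filter, Finset.mem_univ, true_and]
          exact (Finset.mem_filter.mp hy).2
        exact Finset.filter_subset _ _ (hcf _ _ hSne hSsub)
      exact ⟨hchoice, cI, cf, hcI, hcf, fun A _ => by rw [← hind]⟩
    · rw [if_neg hind]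
  · have hswap : ∀ cI cf,
        (∑ c : Finset X → X, if ind cI cf = c then W cI * V cf else 0) = W cI * V cf := by
      intro cI cf
      rw [Finset.sum_ite_eq]
      simp
    calc ∑ c : Finset X → X, ∑ cI : Finset I → I, ∑ cf : I → Finset X → X,
          (if ind cI cf = c then W cI * V cf else 0)
        = ∑ cI : Finset I → I, ∑ cf : I → Finset X → X, ∑ c : Finset X → X,
          (if ind cI cf = c then W cI * V cf else 0) := by
          rw [Finset.sum_comm]
          exact Finset.sum_congr rfl fun cI _ => Finset.sum_comm
      _ = ∑ cI : Finset I → I, ∑ cf : I → Finset X → X, W cI * V cf :=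
          Finset.sum_congr rfl fun cI _ => Finset.sum_congr rfl fun cf _ => hswap cI cf
      _ = (∑ cI : Finset I → I, W cI) * (∑ cf : I → Finset X → X, V cf) :=
          (Finset.sum_mul_sum _ _ _ _).symm
      _ = 1 := by rw [hWsum, hVsum, one_mul]
  · intro A hA a haA
    have himg : (A.image π).Nonempty := hA.image π
    have hSsubcl : ∀ j, (A.filter fun x => π x = j) ⊆ classOf π j := by
      intro j y hy
      simp only [classOf, Finset.mem_filter, Finset.mem_univ, true_and]
      exact (Finset.mem_filter.mp hy).2
    have step1 : (∑ c ∈ Finset.univ.filter (fun c : Finset X → X => c A = a),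
        ∑ cI : Finset I → I, ∑ cf : I → Finset X → X,
          if ind cI cf = c then W cI * V cf else 0)
        = ∑ cI : Finset I → I, ∑ cf : I → Finset X → X,
          (if ind cI cf A = a then W cI * V cf else 0) := by
      rw [Finset.sum_comm]
      refine Finset.sum_congr rfl fun cI _ => ?_
      rw [Finset.sum_comm]
      refine Finset.sum_congr rfl fun cf _ => ?_
      rw [Finset.sum_ite_eq]
      simp
    have step2 : ∀ cI : Finset I → I,
        (∑ cf : I → Finset X → X, if ind cI cf A = a then W cI * V cf else 0)
        = W cI * v (cI (A.image π)) (A.filter fun x => π x = cI (A.image π)) a := by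
      intro cI
      have h1 : ∀ cf : I → Finset X → X, (if ind cI cf A = a then W cI * V cf else 0)
          = W cI * (if cf (cI (A.image π)) (A.filter fun x => π x = cI (A.image π)) = a
              then V cf else 0) := by
        intro cf
        rw [mul_ite, mul_zero]
      rw [Finset.sum_congr rfl fun cf _ => h1 cf, ← Finset.mul_sum]
      congr 1
      rw [show V = fun cf : I → Finset X → X => ∏ i, ∏ S, v i S (cf i S) by
        rw [hVdef, hFdef]]
      exact marginal2 v hv1 (cI (A.image π)) _ a
    have step3 : (∑ cI : Finset I → I,
          W cI * v (cI (A.image π)) (A.filter fun x => π x = cI (A.image π)) a)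
        = ∑ j, wB (A.image π) j * v j (A.filter fun x => π x = j) a := by
      have key : ∀ cI : Finset I → I,
          W cI * v (cI (A.image π)) (A.filter fun x => π x = cI (A.image π)) a
          = ∑ j, if cI (A.image π) = j then W cI * v j (A.filter fun x => π x = j) a else 0 := by
        intro cI
        rw [Finset.sum_ite_eq]
        simp
      rw [Finset.sum_congr rfl fun cI _ => key cI, Finset.sum_comm]
      refine Finset.sum_congr rfl fun j _ => ?_
      have h2 : ∀ cI : Finset I → I,
          (if cI (A.image π) = j then W cI * v j (A.filter fun x => π x = j) a else 0)
          = (if cI (A.image π) = j then W cI else 0) * v j (A.filter fun x => π x = j) a := by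
        intro cI; by_cases hcI : cI (A.image π) = j <;> simp [hcI]
      rw [Finset.sum_congr rfl fun cI _ => h2 cI, ← Finset.sum_mul]
      congr 1
      rw [hWdef]
      exact marginalPt wB hwB1 (A.image π) j
    have step4 : (∑ j, wB (A.image π) j * v j (A.filter fun x => π x = j) a)
        = ω (π a) (A.image π) * σ (π a) a (A.filter fun x => π x = π a) := by
      rw [Finset.sum_eq_single (π a)]
      · rw [hwBval (A.image π) (π a) himg,
          hvval (π a) (A.filter fun x => π x = π a) a ⟨a, Finset.mem_filter.mpr ⟨haA, rfl⟩⟩ (hSsubcl (π a))]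
      · intro j _ hj
        by_cases hjimg : j ∈ A.image π
        · have hS : (A.filter fun x => π x = j).Nonempty := by
            obtain ⟨x, hxA, hxj⟩ := Finset.mem_image.mp hjimg
            exact ⟨x, Finset.mem_filter.mpr ⟨hxA, hxj⟩⟩
          rw [hvval j _ a hS (hSsubcl j),
            hσ0 j a _ (fun hmem => hj ((Finset.mem_filter.mp hmem).2).symm), mul_zero]
        · rw [hwBval (A.image π) j himg, hω0 j (A.image π) hjimg, zero_mul]
      · intro hpa; exact absurd (Finset.mem_univ (π a)) hpa
    have e2 : (∑ cI : Finset I → I, ∑ cf : I → Finset X → X,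
          (if ind cI cf A = a then W cI * V cf else 0))
        = ∑ cI : Finset I → I,
          W cI * v (cI (A.image π)) (A.filter fun x => π x = cI (A.image π)) a :=
      Finset.sum_congr rfl fun cI _ => step2 cI
    rw [hrep A hA a haA, step1, e2, step3, step4]
end

section
/- If an SCC (p,{X_i}) has RUM components — i.e., ω on I and each σ_i admit random utility representations — then p admits a random utility representation on X. -/
open Finset
open scoped Classical

/-- Rank equivalence induced by an injective map into a linear order. -/
noncomputable def rankEquiv {X γ : Type*} [Fintype X] [DecidableEq X] [LinearOrder γ]
    (k : X → γ) (hk : Function.Injective k) : X ≃ Fin (Fintype.card X) :=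
  (Equiv.ofBijective (fun x => (⟨k x, Finset.mem_image_of_mem k (Finset.mem_univ x)⟩ :
      {y // y ∈ Finset.univ.image k}))
    ⟨fun a b hab => hk (congrArg Subtype.val hab),
     fun ⟨y, hy⟩ => by
        obtain ⟨x, _, hx⟩ := Finset.mem_image.1 hy
        exact ⟨x, Subtype.ext hx⟩⟩).trans
    ((Finset.univ.image k).orderIsoOfFin
      (by rw [Finset.card_image_of_injective _ hk, Finset.card_univ])).symm.toEquiv

lemma rankEquiv_lt_iff {X γ : Type*} [Fintype X] [DecidableEq X] [LinearOrder γ]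
    (k : X → γ) (hk : Function.Injective k) (a b : X) :
    rankEquiv k hk a < rankEquiv k hk b ↔ k a < k b := by
  simp only [rankEquiv, Equiv.trans_apply, OrderIso.toEquiv_symm, RelIso.coe_fn_toEquiv]
  exact (OrderIso.lt_iff_lt ((Finset.univ.image k).orderIsoOfFin
    (by rw [Finset.card_image_of_injective _ hk, Finset.card_univ])).symm).trans Iff.rfl

/-- if the components `ω` and `σ i` of an SCC are RUM, so is `p`. -/
theorem stmt17 {X I : Type*} [Fintype X] [DecidableEq X] [Fintype I] [DecidableEq I]
    (p : X → Finset X → ℝ) (π : X → I) (ω : I → Finset I → ℝ)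
    (σ : I → X → Finset X → ℝ)
    (h : IsSCC p π ω σ)
    (hω : IsRUMOn (Finset.univ : Finset I) ω)
    (hσ : ∀ i : I, IsRUMOn (classOf π i) (σ i)) :
    IsRUMOn (Finset.univ : Finset X) p := by
  classical
  obtain ⟨-, -, -, hdec⟩ := h
  obtain ⟨Pω, hPω0, hPω1, hPωeq⟩ := hω
  choose Pσ hPσ0 hPσ1 hPσeq using hσ
  -- seeds
  have hkey : ∀ s : (I ≃ Fin (Fintype.card I)) × (∀ _ : I, X ≃ Fin (Fintype.card X)),
      Function.Injective (fun x : X =>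
        (toLex (s.1 (π x), (s.2 (π x)) x) : Lex (Fin (Fintype.card I) × Fin (Fintype.card X)))) := by
    intro s a b hab
    have h1 : s.1 (π a) = s.1 (π b) := congrArg (fun z => (ofLex z).1) hab
    have hπ : π a = π b := s.1.injective h1
    have h2 : (s.2 (π a)) a = (s.2 (π b)) b := congrArg (fun z => (ofLex z).2) hab
    rw [← hπ] at h2
    exact (s.2 (π a)).injective h2
  set Lmap : ((I ≃ Fin (Fintype.card I)) × (∀ _ : I, X ≃ Fin (Fintype.card X))) →
      (X ≃ Fin (Fintype.card X)) := fun s => rankEquiv _ (hkey s) with hLmap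
  have hLlt : ∀ s, ∀ a b : X, Lmap s a < Lmap s b ↔
      (s.1 (π a) < s.1 (π b) ∨ (π a = π b ∧ (s.2 (π a)) a < (s.2 (π a)) b)) := by
    intro s a b
    rw [hLmap, rankEquiv_lt_iff, Prod.Lex.lt_iff]
    constructor
    · rintro (h1 | ⟨h1, h2⟩)
      · exact Or.inl h1
      · have hπ : π a = π b := s.1.injective h1
        rw [← hπ] at h2
        exact Or.inr ⟨hπ, h2⟩
    · rintro (h1 | ⟨h1, h2⟩)
      · exact Or.inl h1
      · refine Or.inr ⟨by rw [h1]; rfl, ?_⟩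
        rw [← h1]
        exact h2
  set W : ((I ≃ Fin (Fintype.card I)) × (∀ _ : I, X ≃ Fin (Fintype.card X))) → ℝ :=
    fun s => Pω s.1 * ∏ i, Pσ i (s.2 i) with hW
  have hW0 : ∀ s, 0 ≤ W s := fun s =>
    mul_nonneg (hPω0 _) (Finset.prod_nonneg fun i _ => hPσ0 i _)
  refine ⟨fun L => ∑ s ∈ Finset.univ.filter (fun s => Lmap s = L), W s, ?_, ?_, ?_⟩
  · intro L
    exact Finset.sum_nonneg fun s _ => hW0 s
  · rw [Finset.sum_fiberwise_eq_sum_filter Finset.univ Finset.univ Lmap W]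
    simp only [Finset.mem_univ, Finset.filter_true]
    rw [Fintype.sum_prod_type]
    have hM : ∑ M : ∀ _ : I, X ≃ Fin (Fintype.card X), ∏ i, Pσ i (M i) = 1 := by
      rw [← Fintype.prod_sum (fun i (L : X ≃ Fin (Fintype.card X)) => Pσ i L)]
      simp [hPσ1]
    calc ∑ LI : I ≃ Fin (Fintype.card I), ∑ M : ∀ _ : I, X ≃ Fin (Fintype.card X),
          W (LI, M)
        = ∑ LI : I ≃ Fin (Fintype.card I), Pω LI * ∑ M : ∀ _ : I, X ≃ Fin (Fintype.card X),
          ∏ i, Pσ i (M i) := by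
          refine Finset.sum_congr rfl fun LI _ => ?_
          rw [Finset.mul_sum]
      _ = 1 := by rw [hM]; simpa using hPω1
  · intro A hA _ y hy
    set i0 := π y with hi0
    set Aπ := A.image π with hAπ
    set Ay := A.filter (fun x => π x = π y) with hAy
    have hyAy : y ∈ Ay := Finset.mem_filter.2 ⟨hy, rfl⟩
    have hAπne : Aπ.Nonempty := ⟨i0, Finset.mem_image_of_mem π hy⟩
    have hi0Aπ : i0 ∈ Aπ := Finset.mem_image_of_mem π hy
    have hAysub : Ay ⊆ classOf π i0 := by
      intro x hx
      exact Finset.mem_filter.2 ⟨Finset.mem_univ x, (Finset.mem_filter.1 hx).2⟩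
    have hωval := hPωeq Aπ hAπne (Finset.subset_univ _) i0 hi0Aπ
    have hσval := hPσeq i0 Ay ⟨y, hyAy⟩ hAysub y hyAy
    rw [hdec A hA y hy, ← hi0, ← hAπ, ← hAy, hωval, hσval]
    rw [Finset.sum_fiberwise_eq_sum_filter Finset.univ
      (Finset.univ.filter fun L : X ≃ Fin (Fintype.card X) => ∀ b ∈ A, b ≠ y → L b < L y)
      Lmap W]
    simp only [Finset.mem_filter, Finset.mem_univ, true_and]
    -- rewrite the filtering condition
    have hfil : (Finset.univ.filter fun s => ∀ b ∈ A, b ≠ y → Lmap s b < Lmap s y) =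
        Finset.univ.filter (fun s : ((I ≃ Fin (Fintype.card I)) ×
            (∀ _ : I, X ≃ Fin (Fintype.card X))) =>
          (∀ j ∈ Aπ, j ≠ i0 → s.1 j < s.1 i0) ∧
          (∀ b ∈ Ay, b ≠ y → (s.2 i0) b < (s.2 i0) y)) := by
      refine Finset.filter_congr fun s _ => ?_
      constructor
      · intro H
        constructor
        · intro j hj hjne
          obtain ⟨b, hb, rfl⟩ := Finset.mem_image.1 hj
          have hbne : b ≠ y := fun hbe => hjne (by rw [hbe])
          rcases (hLlt s b y).1 (H b hb hbne) with h1 | ⟨h1, -⟩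
          · exact h1
          · exact absurd h1 hjne
        · intro b hb hbne
          have hπb : π b = π y := (Finset.mem_filter.1 hb).2
          rcases (hLlt s b y).1 (H b (Finset.mem_filter.1 hb).1 hbne) with h1 | ⟨-, h2⟩
          · rw [hπb] at h1; exact absurd h1 (lt_irrefl _)
          · rw [hπb] at h2; exact h2
      · rintro ⟨H1, H2⟩ b hb hbne
        by_cases hπb : π b = π y
        · refine (hLlt s b y).2 (Or.inr ⟨hπb, ?_⟩)
          rw [hπb]
          exact H2 b (Finset.mem_filter.2 ⟨hb, hπb⟩) hbne
        · exact (hLlt s b y).2 (Or.inl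
            (H1 (π b) (Finset.mem_image_of_mem π hb) hπb))
    rw [hfil]
    rw [← Finset.univ_product_univ,
      Finset.filter_product (fun LI : I ≃ Fin (Fintype.card I) => ∀ j ∈ Aπ, j ≠ i0 → LI j < LI i0)
        (fun M : ∀ _ : I, X ≃ Fin (Fintype.card X) => ∀ b ∈ Ay, b ≠ y → (M i0) b < (M i0) y),
      Finset.sum_product]
    rw [Finset.sum_mul_sum]
    refine Finset.sum_congr rfl fun LI _ => ?_
    simp only [hW]
    rw [← Finset.mul_sum, ← Finset.mul_sum]
    congr 1
    refine Eq.symm ?_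
    set g : I → (X ≃ Fin (Fintype.card X)) → ℝ :=
      fun i L => if i = i0 then (if (∀ b ∈ Ay, b ≠ y → L b < L y) then Pσ i L else 0)
        else Pσ i L with hg
    calc ∑ M ∈ Finset.univ.filter (fun M : ∀ _ : I, X ≃ Fin (Fintype.card X) =>
            ∀ b ∈ Ay, b ≠ y → (M i0) b < (M i0) y), ∏ i, Pσ i (M i)
        = ∑ M : ∀ _ : I, X ≃ Fin (Fintype.card X), ∏ i, g i (M i) := by
          rw [Finset.sum_filter]
          refine Finset.sum_congr rfl fun M _ => ?_
          by_cases hc : ∀ b ∈ Ay, b ≠ y → (M i0) b < (M i0) y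
          · rw [if_pos hc]
            refine Finset.prod_congr rfl fun i _ => ?_
            by_cases hi : i = i0
            · subst hi; simp only [hg, if_true]; rw [if_pos hc]
            · simp only [hg, if_neg hi]
          · rw [if_neg hc]
            refine (Finset.prod_eq_zero (Finset.mem_univ i0) ?_).symm
            simp only [hg, if_true]
            rw [if_neg hc]
      _ = ∏ i, ∑ L, g i L := (Fintype.prod_sum g).symm
      _ = ∑ L ∈ Finset.univ.filter (fun L : X ≃ Fin (Fintype.card X) =>
            ∀ b ∈ Ay, b ≠ y → L b < L y), Pσ i0 L := by
          rw [Finset.prod_eq_single i0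
            (fun i _ hi => by simp only [hg, if_neg hi]; exact hPσ1 i)
            (fun hmem => absurd (Finset.mem_univ i0) hmem)]
          rw [Finset.sum_filter]
          refine Finset.sum_congr rfl fun L _ => ?_
          simp only [hg, if_true]
end

section
/- If an SCC (p,{X_i}) admits a random utility representation, then its components — the choice over classes ω and each within-class choice σ_i — admit random utility representations; moreover, any distribution over linear orders representing p assigns probability zero to every linear order that does not rank the classes as blocks (i.e., to orders L such that for some classes X_i ≠ X_j and elements a ∈ X_i, b ∈ X_j with a L b, there exist x ∈ X_i, y ∈ X_j with y L x). -/
open Finset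
open scoped Classical

set_option linter.unusedSectionVars false

section Aux18

variable {X I : Type*} [Fintype X] [DecidableEq X] [Fintype I] [DecidableEq I]

lemma aux18_sum_eq_zero_mem {α : Type*} (P : α → ℝ) (h0 : ∀ x, 0 ≤ P x)
    {F G : Finset α} (hFG : F ⊆ G) (heq : ∑ x ∈ G, P x = ∑ x ∈ F, P x)
    {L : α} (hLG : L ∈ G) (hLF : L ∉ F) : P L = 0 := by
  have hs := Finset.sum_sdiff (f := P) hFG
  have h1 : ∑ x ∈ G \ F, P x = 0 := by linarith
  exact (Finset.sum_eq_zero_iff_of_nonneg (fun x _ => h0 x)).1 h1 L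
    (Finset.mem_sdiff.2 ⟨hLG, hLF⟩)

lemma mem_classOf {π : X → I} {x : X} {i : I} : x ∈ classOf π i ↔ π x = i := by
  simp [classOf]

noncomputable def topOf (L : X ≃ Fin (Fintype.card X)) (A : Finset X) (h : A.Nonempty) : X :=
  L.symm ((A.image L).max' (h.image L))

lemma topOf_mem (L : X ≃ Fin (Fintype.card X)) (A : Finset X) (h : A.Nonempty) :
    topOf L A h ∈ A := by
  have hm : (A.image L).max' (h.image L) ∈ A.image L := Finset.max'_mem _ _
  rcases Finset.mem_image.1 hm with ⟨a, ha, hLa⟩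
  have : topOf L A h = a := by simp [topOf, ← hLa]
  rwa [this]

lemma le_topOf (L : X ≃ Fin (Fintype.card X)) {A : Finset X} (h : A.Nonempty)
    {b : X} (hb : b ∈ A) : L b ≤ L (topOf L A h) := by
  have : L (topOf L A h) = (A.image L).max' (h.image L) := by simp [topOf]
  rw [this]
  exact Finset.le_max' _ _ (Finset.mem_image_of_mem _ hb)

lemma lt_topOf (L : X ≃ Fin (Fintype.card X)) {A : Finset X} (h : A.Nonempty)
    {b : X} (hb : b ∈ A) (hne : b ≠ topOf L A h) : L b < L (topOf L A h) :=
  lt_of_le_of_ne (le_topOf L h hb) (fun he => hne (L.injective he))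

lemma topOf_eq (L : X ≃ Fin (Fintype.card X)) {A : Finset X} (h : A.Nonempty)
    {a : X} (ha : a ∈ A) (hb : ∀ b ∈ A, b ≠ a → L b < L a) : topOf L A h = a := by
  by_contra hne
  exact absurd (hb _ (topOf_mem L A h) hne) (not_lt.2 (le_topOf L h ha))

lemma filter_beats_eq {A : Finset X} (h : A.Nonempty) {a : X} (ha : a ∈ A) :
    (Finset.univ.filter fun L : X ≃ Fin (Fintype.card X) => ∀ b ∈ A, b ≠ a → L b < L a)
      = Finset.univ.filter fun L => topOf L A h = a := by
  ext L
  simp only [Finset.mem_filter, Finset.mem_univ, true_and]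
  constructor
  · exact topOf_eq L h ha
  · rintro rfl
    exact fun b hb hne => lt_topOf L h hb hne

noncomputable def classTop (π : X → I) (hc : ∀ i, (classOf π i).Nonempty)
    (L : X ≃ Fin (Fintype.card X)) (i : I) : X :=
  topOf L (classOf π i) (hc i)

lemma classTop_mem (π : X → I) (hc : ∀ i, (classOf π i).Nonempty)
    (L : X ≃ Fin (Fintype.card X)) (i : I) : π (classTop π hc L i) = i :=
  mem_classOf.1 (topOf_mem L (classOf π i) (hc i))

noncomputable def classOrder (π : X → I) (hc : ∀ i, (classOf π i).Nonempty)
    (L : X ≃ Fin (Fintype.card X)) : I ≃ Fin (Fintype.card I) := by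
  classical
  have hf : Function.Injective (fun i => L (classTop π hc L i)) := by
    intro i j hij
    have := L.injective hij
    rw [← classTop_mem π hc L i, ← classTop_mem π hc L j, this]
  have hs : (Finset.univ.image (fun i => L (classTop π hc L i))).card = Fintype.card I := by
    rw [Finset.card_image_of_injective _ hf, Finset.card_univ]
  let o := Finset.orderIsoOfFin _ hs
  have hg : Function.Injective (fun i => o.symm
      ⟨L (classTop π hc L i), Finset.mem_image_of_mem _ (Finset.mem_univ i)⟩) := by
    intro i j hij
    have := o.symm.injective hij
    exact hf (congrArg Subtype.val this)
  exact Equiv.ofBijective _ ((Fintype.bijective_iff_injective_and_card _).2 ⟨hg, by simp⟩)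

lemma classOrder_lt_iff (π : X → I) (hc : ∀ i, (classOf π i).Nonempty)
    (L : X ≃ Fin (Fintype.card X)) (i j : I) :
    classOrder π hc L i < classOrder π hc L j ↔
      L (classTop π hc L i) < L (classTop π hc L j) := by
  simp only [classOrder, Equiv.ofBijective_apply, OrderIso.lt_iff_lt, Subtype.mk_lt_mk]

lemma aux18_key3 {p : X → Finset X → ℝ} {π : X → I} {ω : I → Finset I → ℝ}
    {σ : I → X → Finset X → ℝ} (h : IsSCC p π ω σ)
    (P : (X ≃ Fin (Fintype.card X)) → ℝ) (hP0 : ∀ L, 0 ≤ P L)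
    (hPrep : ∀ A : Finset X, A.Nonempty → ∀ y ∈ A,
      p y A = ∑ L ∈ Finset.univ.filter (fun L : X ≃ Fin (Fintype.card X) =>
        ∀ b ∈ A, b ≠ y → L b < L y), P L)
    {L : X ≃ Fin (Fintype.card X)} {a b c : X} (hab : π a ≠ π b) (hc : π c = π b)
    (hba : L b < L a) (hca : L a < L c) : P L = 0 := by
  obtain ⟨hsurj, hωpos, hσpos, hrep⟩ := h
  have hclass : ∀ i, (classOf π i).Nonempty := fun i => by
    obtain ⟨x, hx⟩ := hsurj i; exact ⟨x, mem_classOf.2 hx⟩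
  have hσ1 : σ (π a) a {a} = 1 := by
    have := ((hσpos (π a)).2 {a} ⟨a, Finset.mem_singleton_self a⟩
      (by intro z hz; rw [Finset.mem_singleton] at hz; subst hz; exact mem_classOf.2 rfl)).1
    simpa using this
  set j := π b with hj
  set S : Finset X := {a, b} with hS
  set T : Finset X := insert a (classOf π j) with hT
  have hbj : b ∈ classOf π j := mem_classOf.2 rfl
  have haS : a ∈ S := by simp [hS]
  have haT : a ∈ T := Finset.mem_insert_self _ _
  have hSfilter : S.filter (fun z => π z = π a) = {a} := by
    ext z
    simp only [hS, Finset.mem_filter, Finset.mem_insert, Finset.mem_singleton]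
    constructor
    · rintro ⟨hz | hz, hπ⟩
      · exact hz
      · subst hz; exact absurd hπ.symm hab
    · rintro rfl; exact ⟨Or.inl rfl, rfl⟩
  have hTfilter : T.filter (fun z => π z = π a) = {a} := by
    ext z
    simp only [hT, Finset.mem_filter, Finset.mem_insert, Finset.mem_singleton]
    constructor
    · rintro ⟨hz | hz, hπ⟩
      · exact hz
      · rw [mem_classOf] at hz; exact absurd (hπ.symm.trans hz) hab
    · rintro rfl; exact ⟨Or.inl rfl, rfl⟩
  have himage : S.image π = T.image π := by
    have h2 : (classOf π j).image π = {j} := by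
      apply Finset.Subset.antisymm
      · intro z hz; rcases Finset.mem_image.1 hz with ⟨w, hw, hwz⟩
        rw [Finset.mem_singleton, ← hwz]; exact mem_classOf.1 hw
      · rcases hclass j with ⟨w, hw⟩
        intro z hz; rw [Finset.mem_singleton] at hz; subst hz
        exact Finset.mem_image.2 ⟨w, hw, mem_classOf.1 hw⟩
    rw [hS, hT, Finset.image_insert, Finset.image_insert, h2, Finset.image_singleton]
  have hpS : p a S = ω (π a) (S.image π) := by
    rw [hrep S ⟨a, haS⟩ a haS, hSfilter, hσ1, mul_one]
  have hpT : p a T = ω (π a) (T.image π) := by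
    rw [hrep T ⟨a, haT⟩ a haT, hTfilter, hσ1, mul_one]
  have hsumeq : (∑ M ∈ Finset.univ.filter (fun M : X ≃ Fin (Fintype.card X) =>
        ∀ z ∈ S, z ≠ a → M z < M a), P M)
      = ∑ M ∈ Finset.univ.filter (fun M : X ≃ Fin (Fintype.card X) =>
        ∀ z ∈ T, z ≠ a → M z < M a), P M := by
    rw [← hPrep S ⟨a, haS⟩ a haS, ← hPrep T ⟨a, haT⟩ a haT, hpS, hpT, himage]
  apply aux18_sum_eq_zero_mem P hP0 ?_ hsumeq ?_ ?_
  · intro M hM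
    rw [Finset.mem_filter] at hM ⊢
    refine ⟨Finset.mem_univ _, fun z hz hne => ?_⟩
    rw [hS, Finset.mem_insert, Finset.mem_singleton] at hz
    rcases hz with rfl | rfl
    · exact absurd rfl hne
    · exact hM.2 z (Finset.mem_insert_of_mem hbj) hne
  · rw [Finset.mem_filter]
    refine ⟨Finset.mem_univ _, fun z hz hne => ?_⟩
    rw [hS, Finset.mem_insert, Finset.mem_singleton] at hz
    rcases hz with rfl | rfl
    · exact absurd rfl hne
    · exact hba
  · rw [Finset.mem_filter]
    rintro ⟨-, hall⟩
    have hcne : c ≠ a := by intro he; apply hab; rw [← hc, he]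
    exact absurd (hall c (Finset.mem_insert_of_mem (mem_classOf.2 hc)) hcne)
      (not_lt.2 (le_of_lt hca))

end Aux18

/-- if an SCC `p` is RUM, then its components `ω` and `σ i` are RUM;
moreover any distribution over rankings representing `p` vanishes on every ranking that
does not rank the classes as blocks. -/
theorem stmt18 {X I : Type*} [Fintype X] [DecidableEq X] [Fintype I] [DecidableEq I]
    (p : X → Finset X → ℝ) (π : X → I) (ω : I → Finset I → ℝ)
    (σ : I → X → Finset X → ℝ)
    (h : IsSCC p π ω σ)
    (hp : IsRUMOn (Finset.univ : Finset X) p) :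
    IsRUMOn (Finset.univ : Finset I) ω ∧
    (∀ i : I, IsRUMOn (classOf π i) (σ i)) ∧
    ∀ P : (X ≃ Fin (Fintype.card X)) → ℝ,
      (∀ L, 0 ≤ P L) → (∑ L, P L) = 1 →
      (∀ A : Finset X, A.Nonempty → ∀ y ∈ A,
        p y A = ∑ L ∈ Finset.univ.filter (fun L : X ≃ Fin (Fintype.card X) =>
          ∀ b ∈ A, b ≠ y → L b < L y), P L) →
      ∀ L : X ≃ Fin (Fintype.card X),
        (∃ a b x y : X, π a ≠ π b ∧ π x = π a ∧ π y = π b ∧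
          L b < L a ∧ L x < L y) →
        P L = 0 := by
  obtain ⟨hsurj, hωpos, hσpos, hrep⟩ := id h
  obtain ⟨P, hP0, hP1, hPrep0⟩ := hp
  have hPrep : ∀ A : Finset X, A.Nonempty → ∀ y ∈ A,
      p y A = ∑ L ∈ Finset.univ.filter (fun L : X ≃ Fin (Fintype.card X) =>
        ∀ b ∈ A, b ≠ y → L b < L y), P L :=
    fun A hA y hy => hPrep0 A hA (Finset.subset_univ A) y hy
  have hclass : ∀ i, (classOf π i).Nonempty := fun i => by
    obtain ⟨x, hx⟩ := hsurj i; exact ⟨x, mem_classOf.2 hx⟩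
  refine ⟨?_, ?_, ?_⟩
  · -- part 1 : ω is RUM
    refine ⟨fun M => ∑ L ∈ Finset.univ.filter (fun L => classOrder π hclass L = M), P L,
      fun M => Finset.sum_nonneg (fun L _ => hP0 L), ?_, ?_⟩
    · rw [← hP1]
      exact Finset.sum_fiberwise_of_maps_to (fun L _ => Finset.mem_univ _) P
    · intro B hB _ y hyB
      set A : Finset X := Finset.univ.filter (fun z => π z ∈ B) with hAdef
      have hclassSub : ∀ b ∈ B, classOf π b ⊆ A := by
        intro b hb z hz
        rw [hAdef, Finset.mem_filter]
        exact ⟨Finset.mem_univ _, (mem_classOf.1 hz) ▸ hb⟩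
      have hAne : A.Nonempty := ⟨(hclass y).choose, hclassSub y hyB (hclass y).choose_spec⟩
      have step1 : (∑ M ∈ Finset.univ.filter
            (fun M : I ≃ Fin (Fintype.card I) => ∀ b ∈ B, b ≠ y → M b < M y),
            ∑ L ∈ Finset.univ.filter (fun L => classOrder π hclass L = M), P L)
          = ∑ L ∈ Finset.univ.filter
            (fun L : X ≃ Fin (Fintype.card X) => π (topOf L A hAne) = y), P L := by
        rw [Finset.sum_fiberwise_eq_sum_filter]
        apply Finset.sum_congr ?_ (fun _ _ => rfl)
        ext L
        simp only [Finset.mem_filter, Finset.mem_univ, true_and]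
        constructor
        · intro hcond
          by_contra hne
          have hmA := topOf_mem L A hAne
          have hmB : π (topOf L A hAne) ∈ B := (Finset.mem_filter.1 hmA).2
          have h1 : L (classTop π hclass L (π (topOf L A hAne)))
              < L (classTop π hclass L y) :=
            (classOrder_lt_iff π hclass L _ _).1 (hcond _ hmB hne)
          have h2 : L (topOf L A hAne) ≤ L (classTop π hclass L (π (topOf L A hAne))) :=
            le_topOf L (hclass _) (mem_classOf.2 rfl)
          have h3 : classTop π hclass L y ∈ A :=
            hclassSub y hyB (topOf_mem L (classOf π y) (hclass y))
          have h4 : classTop π hclass L y ≠ topOf L A hAne := by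
            intro he; exact hne (by rw [← he]; exact classTop_mem π hclass L y)
          have h5 : L (classTop π hclass L y) < L (topOf L A hAne) :=
            lt_topOf L hAne h3 h4
          exact absurd ((h5.trans_le h2).trans h1) (lt_irrefl _)
        · intro hmy b hb hbne
          rw [classOrder_lt_iff]
          have htbA : classTop π hclass L b ∈ A :=
            hclassSub b hb (topOf_mem L (classOf π b) (hclass b))
          have hne : classTop π hclass L b ≠ topOf L A hAne := by
            intro he
            exact hbne (by rw [← classTop_mem π hclass L b, he, hmy])
          have h1 : L (classTop π hclass L b) < L (topOf L A hAne) :=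
            lt_topOf L hAne htbA hne
          have h2 : L (topOf L A hAne) ≤ L (classTop π hclass L y) :=
            le_topOf L (hclass y) (mem_classOf.2 hmy)
          exact h1.trans_le h2
      have step2 : (∑ L ∈ Finset.univ.filter
            (fun L : X ≃ Fin (Fintype.card X) => π (topOf L A hAne) = y), P L)
          = ∑ c ∈ classOf π y, p c A := by
        have e1 : ∀ c ∈ classOf π y, p c A
            = ∑ L ∈ Finset.univ.filter (fun L => topOf L A hAne = c), P L := by
          intro c hc
          rw [hPrep A hAne c (hclassSub y hyB hc), filter_beats_eq hAne (hclassSub y hyB hc)]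
        rw [Finset.sum_congr rfl e1, Finset.sum_fiberwise_eq_sum_filter]
        apply Finset.sum_congr ?_ (fun _ _ => rfl)
        ext L
        simp only [Finset.mem_filter, Finset.mem_univ, true_and, mem_classOf]
      have step3 : (∑ c ∈ classOf π y, p c A) = ω y B := by
        have himg : A.image π = B := by
          apply Finset.Subset.antisymm
          · intro i hi
            rcases Finset.mem_image.1 hi with ⟨z, hz, hzi⟩
            rw [← hzi]
            exact (Finset.mem_filter.1 hz).2
          · intro i hi
            exact Finset.mem_image.2 ⟨(hclass i).choose,
              hclassSub i hi (hclass i).choose_spec,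
              mem_classOf.1 (hclass i).choose_spec⟩
        have e2 : ∀ c ∈ classOf π y, p c A = ω y B * σ y c (classOf π y) := by
          intro c hc
          have hπc : π c = y := mem_classOf.1 hc
          have hfil : A.filter (fun z => π z = π c) = classOf π y := by
            ext z
            simp only [hAdef, Finset.mem_filter, Finset.mem_univ, true_and, mem_classOf, hπc]
            exact ⟨fun hz => hz.2, fun hz => ⟨hz ▸ hyB, hz⟩⟩
          rw [hrep A hAne c (hclassSub y hyB hc), hfil, himg, hπc]
        rw [Finset.sum_congr rfl e2, ← Finset.mul_sum,
          ((hσpos y).2 (classOf π y) (hclass y) Finset.Subset.rfl).1, mul_one]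
      rw [step1, step2, step3]
  · -- part 2 : σ i is RUM on classOf π i
    intro i
    refine ⟨P, hP0, hP1, ?_⟩
    intro A hA hAsub y hy
    have hπy : π y = i := mem_classOf.1 (hAsub hy)
    have hfil : A.filter (fun x => π x = π y) = A :=
      Finset.filter_eq_self.2 (fun z hz => (mem_classOf.1 (hAsub hz)).trans hπy.symm)
    have himg : A.image π = {i} := by
      apply Finset.Subset.antisymm
      · intro z hz
        rcases Finset.mem_image.1 hz with ⟨w, hw, hwz⟩
        rw [Finset.mem_singleton, ← hwz]
        exact mem_classOf.1 (hAsub hw)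
      · intro z hz
        rw [Finset.mem_singleton] at hz; subst hz
        exact Finset.mem_image.2 ⟨y, hy, hπy⟩
    have hω1 : ω i {i} = 1 := by
      have := (hωpos.2 {i} ⟨i, Finset.mem_singleton_self i⟩ (Finset.subset_univ _)).1
      simpa using this
    have h1 := hrep A hA y hy
    rw [hfil, himg, hπy, hω1, one_mul] at h1
    rw [← h1]
    exact hPrep A hA y hy
  · -- part 3
    rintro P' hP0' - hPrep' L ⟨a, b, x, y, hab, hx, hy, hba, hxy⟩
    by_cases hcase : ∀ c ∈ classOf π (π b), L c < L a
    · have hya : L y < L a := hcase y (mem_classOf.2 hy)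
      refine aux18_key3 h P' hP0' hPrep' (a := y) (b := x) (c := a) ?_ hx.symm hxy hya
      rw [hx, hy]; exact hab.symm
    · push_neg at hcase
      obtain ⟨c, hcC, hcla⟩ := hcase
      have hcne : a ≠ c := by
        intro he; apply hab; rw [he]; exact mem_classOf.1 hcC
      have hca : L a < L c :=
        lt_of_le_of_ne hcla (fun he => hcne (L.injective he))
      exact aux18_key3 h P' hP0' hPrep' hab (mem_classOf.1 hcC) hba hca
end
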